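/- arXiv:1609.06402 — 8 statements merged into one kernel-verified Lean document; each statement's English description precedes it below -/
import Mathlib

section
/- P(T_1 = ∞) ≥ 3/4; equivalently, the probability that there exists some n ≥ 1 with S_n > a·n^α + b·n^{1−α} is at most 1/4. -/
open MeasureTheory ProbabilityTheory Real

lemma exp_neg_le_factorial_div {x : ℝ} (hx : 0 < x) (m : ℕ) :
    Real.exp (-x) ≤ m.factorial / x ^ m := by
  have h1 : x ^ m / m.factorial ≤ Real.exp x := by
    calc x ^ m / m.factorial ≤ ∑ i ∈ Finset.range (m+1), x ^ i / i.factorial := by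
          refine Finset.single_le_sum (f := fun i => x ^ i / (i.factorial : ℝ)) ?_ ?_
          · intro i _; positivity
          · simp
      _ ≤ Real.exp x := Real.sum_le_exp_of_nonneg hx.le _
  rw [Real.exp_neg, inv_le_iff_one_le_mul₀ (Real.exp_pos x)]
  have hfac : (0:ℝ) < m.factorial := by exact_mod_cast m.factorial_pos
  calc (1:ℝ) = (m.factorial / x^m) * (x^m / m.factorial) := by field_simp
    _ ≤ (m.factorial / x^m) * Real.exp x := by gcongr

lemma aux_summable {c β : ℝ} (hc : 0 < c) (hβ : 0 < β) :
    Summable (fun k : ℕ => (2:ℝ)^k * Real.exp (-(c * (2:ℝ)^(β * k)))) := by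
  obtain ⟨m, hm⟩ : ∃ m : ℕ, 2 ≤ β * m := by
    refine ⟨⌈2/β⌉₊, ?_⟩
    have h := Nat.le_ceil (2/β)
    calc (2:ℝ) = β * (2/β) := by field_simp
      _ ≤ β * ⌈2/β⌉₊ := by gcongr
  have hgeo : Summable (fun k : ℕ => ((m.factorial : ℝ) / c^m) * (1/2)^k) :=
    (summable_geometric_of_lt_one (by norm_num) (by norm_num)).mul_left _
  refine Summable.of_nonneg_of_le (fun k => by positivity) (fun k => ?_) hgeo
  have h2k : (0:ℝ) < (2:ℝ)^(β * k) := Real.rpow_pos_of_pos two_pos _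
  have hx : (0:ℝ) < c * (2:ℝ)^(β * k) := by positivity
  have hexp := exp_neg_le_factorial_div hx m
  have hpow : ((2:ℝ)^(β * k)) ^ m = (2:ℝ)^(β * k * m) := by
    rw [← Real.rpow_natCast ((2:ℝ)^(β * k)) m, ← Real.rpow_mul (by norm_num)]
  have hge : (4:ℝ)^k ≤ (2:ℝ)^(β * k * m) := by
    have h2 : (2:ℝ) * k ≤ β * k * m := by
      have : (2:ℝ) * k ≤ (β * m) * k := by
        rcases Nat.eq_zero_or_pos k with hk | hk
        · simp [hk]
        · have : (0:ℝ) < k := by exact_mod_cast hk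
          nlinarith
      linarith [this]
    calc (4:ℝ)^k = (2:ℝ)^(2 * (k:ℝ)) := by
          rw [show (2:ℝ) * (k:ℝ) = ((2*k : ℕ) : ℝ) by push_cast; ring,
            Real.rpow_natCast, pow_mul]; norm_num
      _ ≤ (2:ℝ)^(β * k * m) := Real.rpow_le_rpow_of_exponent_le one_le_two h2
  calc (2:ℝ)^k * Real.exp (-(c * (2:ℝ)^(β * k)))
      ≤ (2:ℝ)^k * (m.factorial / (c * (2:ℝ)^(β * k)) ^ m) := by gcongr
    _ = (2:ℝ)^k * m.factorial / (c^m * (2:ℝ)^(β * k * m)) := by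
        rw [mul_pow, hpow]; ring
    _ ≤ (2:ℝ)^k * m.factorial / (c^m * (4:ℝ)^k) := by
        gcongr
    _ = (m.factorial / c^m) * (1/2)^k := by
        rw [show (4:ℝ)^k = (2:ℝ)^k * (2:ℝ)^k by rw [← mul_pow]; norm_num]
        field_simp
        rw [← mul_pow]; norm_num

open scoped ENNReal

/-- **Lemma 1 (Blanchet–Dong–Liu).** For the record-breaking boundary with
parameters `a < min {4δ', 1/2}` and
`b = (4/a) log(4 Σₙ 2ⁿ exp(-a² 2^{2nα-n-4}))`, the probability that the mean-zero
random walk `S` ever exceeds `a n^α + b n^{1-α}` is at most `1/4`; equivalently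
`P(T₁ = ∞) ≥ 3/4`. -/
theorem first_record_breaker_prob_le_quarter
    {Ω : Type*} [MeasurableSpace Ω] (P : Measure Ω) [IsProbabilityMeasure P]
    (X : ℕ → Ω → ℝ) (hmeas : ∀ i, Measurable (X i))
    (hindep : iIndepFun X P)
    (hident : ∀ i, IdentDistrib (X i) (X 0) P P)
    (hmean : ∫ ω, X 0 ω ∂P = 0)
    (δ : ℝ) (hδ : 0 < δ)
    (hmgf : ∀ θ : ℝ, |θ| < δ → Integrable (fun ω => exp (θ * X 0 ω)) P)
    (ψ : ℝ → ℝ) (hψdef : ∀ θ : ℝ, |θ| < δ → ψ θ = Real.log (∫ ω, exp (θ * X 0 ω) ∂P))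
    (δ' : ℝ) (hδ'pos : 0 < δ') (hδ'le : δ' ≤ δ)
    (hψ : ∀ θ : ℝ, |θ| < δ' → ψ θ ≤ θ ^ 2)
    (α a b : ℝ) (hα : 1/2 < α) (hα1 : α < 1)
    (ha0 : 0 < a) (ha : a < min (4 * δ') (1/2))
    (hb : b = (4 / a) *
      Real.log (4 * ∑' n : ℕ, (2:ℝ)^n * exp (-a^2 * (2:ℝ)^(2*(n:ℝ)*α - (n:ℝ) - 4))))
    (S : ℕ → Ω → ℝ) (hS : ∀ n ω, S n ω = ∑ i ∈ Finset.range n, X i ω) :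
    P {ω | ∃ n : ℕ, 1 ≤ n ∧ S n ω > a * (n:ℝ)^α + b * (n:ℝ)^(1-α)} ≤ 1/4 ∧
    3/4 ≤ P {ω | ∀ n : ℕ, 1 ≤ n → S n ω ≤ a * (n:ℝ)^α + b * (n:ℝ)^(1-α)} := by
  classical
  have h2α : 0 < 2 * α - 1 := by linarith
  have haδ' : a < 4 * δ' := lt_of_lt_of_le ha (min_le_left _ _)
  have h16 : (2:ℝ)^(4:ℝ) = 16 := by
    rw [show (4:ℝ) = ((4:ℕ):ℝ) by norm_num, Real.rpow_natCast]; norm_num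
  -- the series terms
  set hterm : ℕ → ℝ := fun n => (2:ℝ)^n * exp (-a^2 * (2:ℝ)^(2*(n:ℝ)*α - (n:ℝ) - 4))
    with hhterm
  have hterm_eq : ∀ n : ℕ, hterm n
      = (2:ℝ)^n * exp (-((a^2/16) * (2:ℝ)^((2*α-1) * (n:ℝ)))) := by
    intro n
    have harg : -a^2 * (2:ℝ)^(2*(n:ℝ)*α - (n:ℝ) - 4)
        = -((a^2/16) * (2:ℝ)^((2*α-1) * (n:ℝ))) := by
      rw [show 2*(n:ℝ)*α - (n:ℝ) - 4 = (2*α-1)*(n:ℝ) - 4 by ring,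
        Real.rpow_sub two_pos, h16]
      ring
    simp only [hhterm, harg]
  have hsum : Summable hterm := by
    refine (aux_summable (c := a^2/16) (by positivity) h2α).congr fun n => ?_
    rw [hterm_eq n]
  set K := ∑' n : ℕ, hterm n with hKdef
  have hKpos : 0 < K :=
    Summable.tsum_pos hsum (fun n => by rw [hterm_eq]; positivity) 0
      (by rw [hterm_eq]; positivity)
  have hK0 : K ≠ 0 := hKpos.ne'
  -- the constant r
  set r : ℝ := Real.exp (-(a * b / 4)) with hrdef
  have hrpos : 0 < r := Real.exp_pos _
  have hab4 : a * b / 4 = Real.log (4 * K) := by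
    rw [hb]; field_simp
  have hr : r = (4 * K)⁻¹ := by
    rw [hrdef, hab4, Real.exp_neg, Real.exp_log (by positivity)]
  -- measurability of S n
  have hSfun : ∀ n : ℕ, S n = ∑ i ∈ Finset.range n, X i := by
    intro n; funext ω; rw [hS]; simp
  have hSmeas : ∀ n : ℕ, Measurable (S n) := by
    intro n
    have : S n = fun ω => ∑ i ∈ Finset.range n, X i ω := funext (hS n)
    rw [this]
    exact Finset.measurable_sum _ fun i _ => hmeas i
  -- the sets
  set A : ℕ → Set Ω := fun n =>
    {ω | 1 ≤ n ∧ S n ω > a * (n:ℝ)^α + b * (n:ℝ)^(1-α)} with hAdef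
  have hAmeas : ∀ n, MeasurableSet (A n) := by
    intro n
    rcases Nat.eq_zero_or_pos n with hn | hn
    · have : A n = ∅ := by ext ω; simp [hAdef, hn]
      rw [this]; exact MeasurableSet.empty
    · have : A n = {ω | a * (n:ℝ)^α + b * (n:ℝ)^(1-α) < S n ω} := by
        ext ω
        simp only [hAdef, Set.mem_setOf_eq, gt_iff_lt]
        exact and_iff_right hn
      rw [this]
      exact measurableSet_lt measurable_const (hSmeas n)
  -- per-n Chernoff bound
  have hg : ∀ n : ℕ, 1 ≤ n →
      (P {ω | a * (n:ℝ)^α + b * (n:ℝ)^(1-α) ≤ S n ω}).toReal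
        ≤ exp (-(3*a^2/16) * (n:ℝ)^(2*α-1)) * r := by
    intro n hn
    have hn0 : (0:ℝ) < (n:ℝ) := by exact_mod_cast hn
    have hn1 : (1:ℝ) ≤ (n:ℝ) := by exact_mod_cast hn
    set t : ℝ := a/4 * (n:ℝ)^(α-1) with htdef
    have hu1 : (n:ℝ)^(α-1) ≤ 1 :=
      Real.rpow_le_one_of_one_le_of_nonpos hn1 (by linarith)
    have hupos : (0:ℝ) < (n:ℝ)^(α-1) := Real.rpow_pos_of_pos hn0 _
    have htpos : 0 < t := by positivity
    have htδ' : |t| < δ' := by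
      rw [abs_of_pos htpos]
      calc t ≤ a/4 * 1 := by rw [htdef]; gcongr
        _ < δ' := by linarith
    have htδ : |t| < δ := lt_of_lt_of_le htδ' hδ'le
    have hint0 : Integrable (fun ω => exp (t * X 0 ω)) P := hmgf t htδ
    have hinti : ∀ i, Integrable (fun ω => exp (t * X i ω)) P := by
      intro i
      exact ((hident i).comp ((measurable_id.const_mul t).exp)).integrable_iff.mpr hint0
    have hintS : Integrable (fun ω => exp (t * S n ω)) P := by
      rw [hSfun]
      exact hindep.integrable_exp_mul_sum hmeas fun i _ => hinti i
    have hmgf_eq : ∀ i, mgf (X i) P t = mgf (X 0) P t := by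
      intro i
      exact ((hident i).comp ((measurable_id.const_mul t).exp)).integral_eq
    have hmgfS : mgf (S n) P t = (mgf (X 0) P t)^n := by
      rw [hSfun, hindep.mgf_sum hmeas]
      rw [Finset.prod_congr rfl fun i _ => hmgf_eq i, Finset.prod_const,
        Finset.card_range]
    have hmgf0pos : 0 < mgf (X 0) P t := mgf_pos hint0
    have hmgf0le : mgf (X 0) P t ≤ exp (t^2) := by
      have hlog : Real.log (mgf (X 0) P t) ≤ t^2 := by
        rw [mgf, ← hψdef t htδ]
        exact hψ t htδ'
      calc mgf (X 0) P t = exp (Real.log (mgf (X 0) P t)) :=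
            (Real.exp_log hmgf0pos).symm
        _ ≤ exp (t^2) := Real.exp_le_exp.mpr hlog
    have hcher := measure_ge_le_exp_mul_mgf (X := S n) (μ := P)
      (a * (n:ℝ)^α + b * (n:ℝ)^(1-α)) htpos.le hintS
    have hbound : exp (-t * (a * (n:ℝ)^α + b * (n:ℝ)^(1-α))) * mgf (S n) P t
        ≤ exp (-(3*a^2/16) * (n:ℝ)^(2*α-1)) * r := by
      calc exp (-t * (a * (n:ℝ)^α + b * (n:ℝ)^(1-α))) * mgf (S n) P t
          ≤ exp (-t * (a * (n:ℝ)^α + b * (n:ℝ)^(1-α))) * exp (t^2) ^ n := by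
            rw [hmgfS]
            gcongr
        _ = exp ((n:ℝ) * t^2 - t * (a * (n:ℝ)^α + b * (n:ℝ)^(1-α))) := by
            rw [← Real.exp_nat_mul, ← Real.exp_add]
            congr 1; ring
        _ = exp (-(3*a^2/16) * (n:ℝ)^(2*α-1)) * r := by
            rw [hrdef, ← Real.exp_add]
            congr 1
            have e1 : (n:ℝ)^(α-1) * (n:ℝ)^α = (n:ℝ)^(2*α-1) := by
              rw [← Real.rpow_add hn0]; congr 1; ring
            have e2 : (n:ℝ)^(α-1) * (n:ℝ)^(1-α) = 1 := by
              rw [← Real.rpow_add hn0, show α-1+(1-α) = (0:ℝ) by ring,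
                Real.rpow_zero]
            have e3 : (n:ℝ) * ((n:ℝ)^(α-1))^2 = (n:ℝ)^(2*α-1) := by
              have h' : ((n:ℝ)^(α-1))^2 = (n:ℝ)^(2*α-2) := by
                rw [← Real.rpow_natCast ((n:ℝ)^(α-1)) 2,
                  ← Real.rpow_mul hn0.le]
                congr 1; norm_num; ring
              rw [h']
              nth_rewrite 1 [← Real.rpow_one (n:ℝ)]
              rw [← Real.rpow_add hn0]; congr 1; ring
            have expand : (n:ℝ) * t^2 - t * (a * (n:ℝ)^α + b * (n:ℝ)^(1-α))
                = (a^2/16) * ((n:ℝ) * ((n:ℝ)^(α-1))^2)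
                  - (a^2/4) * ((n:ℝ)^(α-1) * (n:ℝ)^α)
                  - (a*b/4) * ((n:ℝ)^(α-1) * (n:ℝ)^(1-α)) := by
              rw [htdef]; ring
            rw [expand, e1, e2, e3]; ring
    exact hcher.trans hbound
  -- convert to ENNReal bound on A n
  set F : ℕ → ℝ≥0∞ := fun n =>
    if n = 0 then 0 else ENNReal.ofReal (exp (-(3*a^2/16) * (n:ℝ)^(2*α-1))) with hFdef
  have hPA : ∀ n, P (A n) ≤ ENNReal.ofReal r * F n := by
    intro n
    rcases Nat.eq_zero_or_pos n with hn | hn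
    · have : A n = ∅ := by ext ω; simp [hAdef, hn]
      rw [this]; simp
    · have hsub : A n ⊆ {ω | a * (n:ℝ)^α + b * (n:ℝ)^(1-α) ≤ S n ω} :=
        fun ω hω => le_of_lt hω.2
      have h1 : P (A n) ≤ P {ω | a * (n:ℝ)^α + b * (n:ℝ)^(1-α) ≤ S n ω} :=
        measure_mono hsub
      have h2 : P {ω | a * (n:ℝ)^α + b * (n:ℝ)^(1-α) ≤ S n ω}
          ≤ ENNReal.ofReal (exp (-(3*a^2/16) * (n:ℝ)^(2*α-1)) * r) := by
        rw [← ENNReal.ofReal_toReal (measure_ne_top P _)]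
        exact ENNReal.ofReal_le_ofReal (hg n hn)
      refine h1.trans (h2.trans (le_of_eq ?_))
      rw [ENNReal.ofReal_mul (by positivity)]
      simp only [hFdef, Nat.pos_iff_ne_zero.mp hn, if_false]
      rw [mul_comm]
  -- antitonicity and condensation
  have hFanti : ∀ ⦃m n : ℕ⦄, 0 < m → m ≤ n → F n ≤ F m := by
    intro m n hm hmn
    have hm0 : m ≠ 0 := hm.ne'
    have hn0 : n ≠ 0 := by omega
    simp only [hFdef, hm0, hn0, if_false]
    apply ENNReal.ofReal_le_ofReal
    apply Real.exp_le_exp.mpr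
    have hmono : (m:ℝ)^(2*α-1) ≤ (n:ℝ)^(2*α-1) :=
      Real.rpow_le_rpow (by positivity) (by exact_mod_cast hmn) h2α.le
    have hc : -(3*a^2/16) ≤ 0 := by nlinarith
    exact mul_le_mul_of_nonpos_left hmono hc
  have hcond : ∑' n, F n ≤ ∑' k : ℕ, 2^k * F (2^k) := by
    have h := ENNReal.le_tsum_condensed hFanti
    simpa [hFdef] using h
  have hck : ∀ k : ℕ, (2:ℝ≥0∞)^k * F (2^k) ≤ ENNReal.ofReal (hterm k) := by
    intro k
    have h2kne : (2:ℕ)^k ≠ 0 := by positivity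
    simp only [hFdef, h2kne, if_false]
    rw [show ((2:ℝ≥0∞))^k = ENNReal.ofReal ((2:ℝ)^k) by
      rw [ENNReal.ofReal_pow (by norm_num)]; norm_num]
    rw [← ENNReal.ofReal_mul (by positivity)]
    apply ENNReal.ofReal_le_ofReal
    rw [hterm_eq k]
    have hc : (((2:ℕ)^k : ℕ):ℝ) = (2:ℝ)^k := by push_cast; ring
    rw [hc]
    have hpow : ((2:ℝ)^k)^(2*α-1) = (2:ℝ)^((2*α-1)*(k:ℝ)) := by
      rw [← Real.rpow_natCast 2 k, ← Real.rpow_mul (by norm_num)]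
      congr 1; ring
    rw [hpow]
    have hY : (0:ℝ) ≤ (2:ℝ)^((2*α-1)*(k:ℝ)) := (Real.rpow_pos_of_pos two_pos _).le
    gcongr
    nlinarith
  -- main bound on the union
  have hmainU : P (⋃ n, A n) ≤ 1/4 := by
    calc P (⋃ n, A n) ≤ ∑' n, P (A n) := measure_iUnion_le _
      _ ≤ ∑' n, ENNReal.ofReal r * F n := ENNReal.tsum_le_tsum hPA
      _ = ENNReal.ofReal r * ∑' n, F n := ENNReal.tsum_mul_left
      _ ≤ ENNReal.ofReal r * ∑' k : ℕ, 2^k * F (2^k) := by gcongr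
      _ ≤ ENNReal.ofReal r * ∑' k, ENNReal.ofReal (hterm k) := by
          gcongr with k
          exact hck k
      _ = ENNReal.ofReal r * ENNReal.ofReal K := by
          rw [← ENNReal.ofReal_tsum_of_nonneg
            (fun n => by rw [hterm_eq]; positivity) hsum]
      _ = ENNReal.ofReal (r * K) := (ENNReal.ofReal_mul hrpos.le).symm
      _ = ENNReal.ofReal (1/4) := by
          congr 1
          rw [hr]; field_simp
      _ ≤ 1/4 := le_of_eq (by
          rw [ENNReal.ofReal_div_of_pos (by norm_num)]
          norm_num)
  have hset : {ω | ∃ n : ℕ, 1 ≤ n ∧ S n ω > a * (n:ℝ)^α + b * (n:ℝ)^(1-α)}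
      = ⋃ n, A n := by
    ext ω
    simp only [hAdef, Set.mem_iUnion, Set.mem_setOf_eq]
  constructor
  · rw [hset]; exact hmainU
  · have hBadMeas : MeasurableSet (⋃ n, A n) := MeasurableSet.iUnion hAmeas
    have hcompl : {ω | ∀ n : ℕ, 1 ≤ n → S n ω ≤ a * (n:ℝ)^α + b * (n:ℝ)^(1-α)}
        = (⋃ n, A n)ᶜ := by
      ext ω
      simp only [hAdef, Set.mem_compl_iff, Set.mem_iUnion, Set.mem_setOf_eq,
        not_exists, not_and, not_lt, gt_iff_lt]
    rw [hcompl, prob_compl_eq_one_sub hBadMeas]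
    have h14 : (3:ℝ≥0∞)/4 + 1/4 = 1 := by
      rw [ENNReal.div_add_div_same, show (3:ℝ≥0∞)+1 = 4 by norm_num,
        ENNReal.div_self (by norm_num) (by norm_num)]
    calc (3:ℝ≥0∞)/4 = 1 - 1/4 :=
          (ENNReal.sub_eq_of_eq_add (by norm_num) h14.symm).symm
      _ ≤ 1 - P (⋃ n, A n) := tsub_le_tsub_left hmainU 1
end

section
/- For every integer n ≥ 0 and every integer k with 2^n ≤ k < 2^{n+1}, P(S_k > a·k^α + b·k^{1−α}) ≤ exp(−a²·2^{2nα−n−3} − ab/4). -/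
open MeasureTheory ProbabilityTheory Real

/-- The Chernoff-type per-index bound used in the proof of Lemma 1:
for `2^n ≤ k < 2^{n+1}`,
`P(S_k > a k^α + b k^{1-α}) ≤ exp(-a² 2^{2nα-n-3} - a b / 4)`. -/
theorem record_breaker_dyadic_block_bound
    {Ω : Type*} [MeasurableSpace Ω] (P : Measure Ω) [IsProbabilityMeasure P]
    (X : ℕ → Ω → ℝ) (hmeas : ∀ i, Measurable (X i))
    (hindep : iIndepFun X P)
    (hident : ∀ i, IdentDistrib (X i) (X 0) P P)
    (hmean : ∫ ω, X 0 ω ∂P = 0)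
    (δ : ℝ) (hδ : 0 < δ)
    (hmgf : ∀ θ : ℝ, |θ| < δ → Integrable (fun ω => exp (θ * X 0 ω)) P)
    (ψ : ℝ → ℝ) (hψdef : ∀ θ : ℝ, |θ| < δ → ψ θ = Real.log (∫ ω, exp (θ * X 0 ω) ∂P))
    (δ' : ℝ) (hδ'pos : 0 < δ') (hδ'le : δ' ≤ δ)
    (hψ : ∀ θ : ℝ, |θ| < δ' → ψ θ ≤ θ ^ 2)
    (α a b : ℝ) (hα : 1/2 < α) (hα1 : α < 1)
    (ha0 : 0 < a) (ha : a < min (4 * δ') (1/2)) (hb : 0 ≤ b)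
    (S : ℕ → Ω → ℝ) (hS : ∀ n ω, S n ω = ∑ i ∈ Finset.range n, X i ω) :
    ∀ n k : ℕ, 2^n ≤ k → k < 2^(n+1) →
      P {ω | S k ω > a * (k:ℝ)^α + b * (k:ℝ)^(1-α)} ≤
        ENNReal.ofReal (exp (-a^2 * (2:ℝ)^(2*(n:ℝ)*α - (n:ℝ) - 3) - a*b/4)) := by
  intro n k hk1 hk2
  have hk0 : 1 ≤ k := le_trans (Nat.one_le_two_pow) hk1
  set r : ℝ := (k : ℝ) with hr
  have hr1 : (1:ℝ) ≤ r := by rw [hr]; exact_mod_cast hk0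
  have hrpos : (0:ℝ) < r := lt_of_lt_of_le one_pos hr1
  set θ : ℝ := a / 4 * r ^ (α - 1) with hθ
  have hrpow1 : r ^ (α - 1) ≤ 1 :=
    Real.rpow_le_one_of_one_le_of_nonpos hr1 (by linarith)
  have hrpowpos : 0 < r ^ (α - 1) := Real.rpow_pos_of_pos hrpos _
  have hθpos : 0 < θ := mul_pos (by linarith) hrpowpos
  have haδ' : a < 4 * δ' := lt_of_lt_of_le ha (min_le_left _ _)
  have hθδ' : θ < δ' := by
    have : θ ≤ a / 4 := by
      calc θ = a / 4 * r ^ (α - 1) := rfl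
        _ ≤ a / 4 * 1 := by
            apply mul_le_mul_of_nonneg_left hrpow1 (by linarith)
        _ = a / 4 := mul_one _
    linarith
  have hθδ : |θ| < δ := by
    rw [abs_of_pos hθpos]; exact lt_of_lt_of_le hθδ' hδ'le
  -- integrability of exp (θ * X i)
  have hexpmeas : Measurable fun x : ℝ => exp (θ * x) :=
    (measurable_const_mul θ).exp
  have hint0 : Integrable (fun ω => exp (θ * X 0 ω)) P := hmgf θ hθδ
  have hint : ∀ i, Integrable (fun ω => exp (θ * X i ω)) P := fun i =>
    (((hident i).comp hexpmeas).integrable_iff).2 hint0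
  -- mgf of each X i
  have hmgf_eq : ∀ i, mgf (X i) P θ = mgf (X 0) P θ := fun i =>
    ((hident i).comp hexpmeas).integral_eq
  have hmgf0pos : 0 < mgf (X 0) P θ := mgf_pos hint0
  have hmgf0le : mgf (X 0) P θ ≤ exp (θ ^ 2) := by
    have h1 : ψ θ = Real.log (mgf (X 0) P θ) := hψdef θ hθδ
    have h2 : ψ θ ≤ θ ^ 2 := hψ θ (by rw [abs_of_pos hθpos]; exact hθδ')
    have := Real.exp_log hmgf0pos
    calc mgf (X 0) P θ = exp (Real.log (mgf (X 0) P θ)) := this.symm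
      _ = exp (ψ θ) := by rw [h1]
      _ ≤ exp (θ ^ 2) := exp_le_exp.2 h2
  -- Chernoff
  set ε : ℝ := a * r ^ α + b * r ^ (1 - α) with hε
  have hsum_int : Integrable (fun ω => exp (θ * (∑ i ∈ Finset.range k, X i) ω)) P :=
    hindep.integrable_exp_mul_sum hmeas (fun i _ => hint i)
  have hcher := measure_ge_le_exp_mul_mgf (μ := P) (X := ∑ i ∈ Finset.range k, X i)
    ε hθpos.le hsum_int
  have hmgfsum : mgf (∑ i ∈ Finset.range k, X i) P θ ≤ exp ((k:ℝ) * θ ^ 2) := by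
    rw [hindep.mgf_sum hmeas]
    calc (∏ i ∈ Finset.range k, mgf (X i) P θ)
        = mgf (X 0) P θ ^ k := by
          rw [Finset.prod_congr rfl fun i _ => hmgf_eq i, Finset.prod_const,
            Finset.card_range]
      _ ≤ exp (θ ^ 2) ^ k := pow_le_pow_left₀ hmgf0pos.le hmgf0le k
      _ = exp ((k:ℝ) * θ ^ 2) := (Real.exp_nat_mul _ k).symm
  -- the exponent bound
  have hθε : θ * ε = a ^ 2 / 4 * r ^ (2 * α - 1) + a * b / 4 := by
    have h1 : r ^ (α - 1) * r ^ α = r ^ (2 * α - 1) := by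
      rw [← Real.rpow_add hrpos]; ring_nf
    have h2 : r ^ (α - 1) * r ^ (1 - α) = 1 := by
      rw [← Real.rpow_add hrpos]; norm_num
    calc θ * ε = a ^ 2 / 4 * (r ^ (α - 1) * r ^ α)
        + a * b / 4 * (r ^ (α - 1) * r ^ (1 - α)) := by rw [hθ, hε]; ring
      _ = a ^ 2 / 4 * r ^ (2 * α - 1) + a * b / 4 := by rw [h1, h2]; ring
  have hkθ2 : (k:ℝ) * θ ^ 2 = a ^ 2 / 16 * r ^ (2 * α - 1) := by
    have h1 : r * (r ^ (α - 1)) ^ 2 = r ^ (2 * α - 1) := by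
      rw [← Real.rpow_natCast (r ^ (α - 1)) 2, ← Real.rpow_mul hrpos.le]
      nth_rewrite 1 [← Real.rpow_one r]
      rw [← Real.rpow_add hrpos]; ring_nf
    calc (k:ℝ) * θ ^ 2 = a ^ 2 / 16 * (r * (r ^ (α - 1)) ^ 2) := by rw [hθ]; ring
      _ = a ^ 2 / 16 * r ^ (2 * α - 1) := by rw [h1]
  have hpow_lb : (2:ℝ) ^ (2 * (n:ℝ) * α - (n:ℝ) - 3) ≤ r ^ (2 * α - 1) / 8 := by
    have h2n : ((2:ℝ) ^ n) ^ (2 * α - 1) = (2:ℝ) ^ ((n:ℝ) * (2 * α - 1)) := by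
      rw [← Real.rpow_natCast (2:ℝ) n, ← Real.rpow_mul (by norm_num : (0:ℝ) ≤ 2)]
    have hle : ((2:ℝ) ^ n) ^ (2 * α - 1) ≤ r ^ (2 * α - 1) := by
      apply Real.rpow_le_rpow (by positivity) _ (by linarith)
      rw [hr]; exact_mod_cast hk1
    have hsplit : (2:ℝ) ^ (2 * (n:ℝ) * α - (n:ℝ) - 3)
        = (2:ℝ) ^ ((n:ℝ) * (2 * α - 1)) * (2:ℝ) ^ (-3 : ℝ) := by
      rw [← Real.rpow_add (by norm_num : (0:ℝ) < 2)]; ring_nf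
    rw [hsplit, ← h2n]
    have h8 : (2:ℝ) ^ (-3:ℝ) = 1 / 8 := by
      rw [show (-3:ℝ) = ((-3:ℤ):ℝ) by norm_num, Real.rpow_intCast]
      norm_num
    rw [h8]
    calc ((2:ℝ) ^ n) ^ (2 * α - 1) * (1/8) ≤ r ^ (2 * α - 1) * (1/8) := by
          apply mul_le_mul_of_nonneg_right hle (by norm_num)
      _ = r ^ (2 * α - 1) / 8 := by ring
  have hexp_ineq : -θ * ε + (k:ℝ) * θ ^ 2 ≤
      -a ^ 2 * (2:ℝ) ^ (2 * (n:ℝ) * α - (n:ℝ) - 3) - a * b / 4 := by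
    rw [hkθ2, neg_mul, hθε]
    have ha2 : 0 ≤ a ^ 2 := sq_nonneg a
    nlinarith [hpow_lb, Real.rpow_pos_of_pos hrpos (2 * α - 1)]
  -- put it together
  have hsub : {ω | S k ω > ε} ⊆ {ω | ε ≤ (∑ i ∈ Finset.range k, X i) ω} := by
    intro ω hω
    simp only [Set.mem_setOf_eq, Finset.sum_apply]
    rw [← hS k ω]
    exact le_of_lt hω
  refine le_trans (measure_mono hsub) ?_
  rw [ENNReal.le_ofReal_iff_toReal_le (measure_ne_top P _) (exp_nonneg _)]
  calc (P {ω | ε ≤ (∑ i ∈ Finset.range k, X i) ω}).toReal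
      ≤ exp (-θ * ε) * mgf (∑ i ∈ Finset.range k, X i) P θ := hcher
    _ ≤ exp (-θ * ε) * exp ((k:ℝ) * θ ^ 2) := by
        apply mul_le_mul_of_nonneg_left hmgfsum (exp_nonneg _)
    _ = exp (-θ * ε + (k:ℝ) * θ ^ 2) := (Real.exp_add _ _).symm
    _ ≤ exp (-a ^ 2 * (2:ℝ) ^ (2 * (n:ℝ) * α - (n:ℝ) - 3) - a * b / 4) :=
        exp_le_exp.2 hexp_ineq
end

section
/- Let ξ := sup_{n≥0}{(a·n^α + b·n^{1−α}) − (1/2)·n^α}. Suppose s : ℕ → ℝ, m ≥ 0, 2·s(m) + 2ξ ≥ 0, and for every n ≥ 1, s(m+n) ≤ s(m) + a·n^α + b·n^{1−α} (no record is broken after time m). Set Γ := ⌈(2·s(m) + 2ξ)^{1/α}⌉. Then for every n ≥ Γ, s(m+n) ≤ (m+n)^α. In particular, if S_n never exceeds S_{T_{κ−1}} plus the record-breaking boundary after T_{κ−1}, then S_n ≤ n^α for all n ≥ T_{κ−1} + Γ(κ). -/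
open Real

/-- **Lemma 2 (deterministic form).** If after time `m` the path `s` never breaks
the record boundary `s m + a n^α + b n^{1-α}`, then for all
`n ≥ Γ = ⌈(2 s(m) + 2ξ)^{1/α}⌉` one has `s(m+n) ≤ (m+n)^α`, where
`ξ = sup_{n ≥ 0} (a n^α + b n^{1-α} - n^α / 2)`. -/
theorem no_record_breaker_below_boundary
    (α a b : ℝ) (hα : 1/2 < α) (hα1 : α < 1)
    (ha0 : 0 < a) (ha : a < 1/2) (hb : 0 < b)
    (ξ : ℝ)
    (hξ : ξ = ⨆ n : ℕ, (a * (n:ℝ)^α + b * (n:ℝ)^(1-α) - (1/2) * (n:ℝ)^α))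
    (s : ℕ → ℝ) (m : ℕ)
    (hpos : 0 ≤ 2 * s m + 2 * ξ)
    (hnb : ∀ n : ℕ, 1 ≤ n → s (m + n) ≤ s m + a * (n:ℝ)^α + b * (n:ℝ)^(1-α))
    (Γ : ℕ) (hΓ : Γ = ⌈(2 * s m + 2 * ξ) ^ (1/α)⌉₊) :
    ∀ n : ℕ, Γ ≤ n → s (m + n) ≤ ((m + n : ℕ) : ℝ)^α := by
  have hαpos : 0 < α := by linarith
  have hc : 0 < 1/2 - a := by linarith
  set c : ℝ := 1/2 - a with hcdef
  set R : ℝ := (b / c) ^ (1 / (2*α - 1)) with hRdef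
  have hR0 : 0 ≤ R := Real.rpow_nonneg (le_of_lt (div_pos hb hc)) _
  have h2α : 0 < 2*α - 1 := by linarith
  -- boundedness
  have hbdd : BddAbove (Set.range fun n : ℕ =>
      (a * (n:ℝ)^α + b * (n:ℝ)^(1-α) - (1/2) * (n:ℝ)^α)) := by
    refine ⟨b * R ^ (1-α), ?_⟩
    rintro x ⟨n, rfl⟩
    dsimp only
    have hn0 : (0:ℝ) ≤ (n:ℝ) := Nat.cast_nonneg n
    rcases le_or_gt (n:ℝ) R with h | h
    · have h1 : a * (n:ℝ)^α - (1/2) * (n:ℝ)^α ≤ 0 := by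
        nlinarith [Real.rpow_nonneg hn0 α]
      have h2 : (n:ℝ)^(1-α) ≤ R^(1-α) :=
        Real.rpow_le_rpow hn0 h (by linarith)
      nlinarith
    · have hnpos : (0:ℝ) < (n:ℝ) := lt_of_le_of_lt hR0 h
      have hkey : b * (n:ℝ)^(1-α) ≤ c * (n:ℝ)^α := by
        have hsplit : (n:ℝ)^α = (n:ℝ)^(1-α) * (n:ℝ)^(2*α-1) := by
          rw [← Real.rpow_add hnpos]; ring_nf
        have hpow : b / c ≤ (n:ℝ)^(2*α-1) := by
          have := Real.rpow_le_rpow hR0 h.le h2α.le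
          rwa [hRdef, ← Real.rpow_mul (le_of_lt (div_pos hb hc)),
            one_div, inv_mul_cancel₀ (ne_of_gt h2α), Real.rpow_one] at this
        have h1α : (0:ℝ) ≤ (n:ℝ)^(1-α) := Real.rpow_nonneg hn0 _
        calc b * (n:ℝ)^(1-α) = (b/c) * (n:ℝ)^(1-α) * c := by field_simp
          _ ≤ (n:ℝ)^(2*α-1) * (n:ℝ)^(1-α) * c := by
              apply mul_le_mul_of_nonneg_right _ hc.le
              exact mul_le_mul_of_nonneg_right hpow h1α
          _ = c * (n:ℝ)^α := by rw [hsplit]; ring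
      have hRpow : 0 ≤ b * R^(1-α) :=
        mul_nonneg hb.le (Real.rpow_nonneg hR0 _)
      rw [hcdef] at hkey
      linarith
  have hle : ∀ n : ℕ, a * (n:ℝ)^α + b * (n:ℝ)^(1-α) - (1/2) * (n:ℝ)^α ≤ ξ := by
    intro n; rw [hξ]; exact le_ciSup hbdd n
  have hξ0 : 0 ≤ ξ := by
    have := hle 0
    simp [Real.zero_rpow (ne_of_gt hαpos), Real.zero_rpow (show (1:ℝ)-α ≠ 0 by linarith)] at this
    linarith
  intro n hn
  set x : ℝ := 2 * s m + 2 * ξ with hxdef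
  rcases Nat.eq_zero_or_pos n with rfl | hn1
  · -- n = 0 : Γ = 0 forces x = 0
    have hΓ0 : Γ = 0 := Nat.le_zero.mp hn
    have hceil : x ^ (1/α) ≤ 0 := by
      have := hΓ.symm.trans hΓ0
      exact Nat.ceil_eq_zero.mp this
    have hx0 : x = 0 := by
      by_contra hne
      have hxpos : 0 < x := lt_of_le_of_ne hpos (Ne.symm hne)
      have := Real.rpow_pos_of_pos hxpos (1/α)
      linarith
    have hsm : s m ≤ 0 := by
      simp only [hxdef] at hx0; linarith
    have : (0:ℝ) ≤ ((m + 0 : ℕ) : ℝ)^α := Real.rpow_nonneg (Nat.cast_nonneg _) _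
    simpa using hsm.trans this
  · have hnb' := hnb n hn1
    have hle' := hle n
    -- x ≤ n^α
    have hnx : x ≤ (n:ℝ)^α := by
      have h1 : x ^ (1/α) ≤ (n:ℝ) := by
        calc x ^ (1/α) ≤ (⌈x ^ (1/α)⌉₊ : ℝ) := Nat.le_ceil _
          _ ≤ (n:ℝ) := by exact_mod_cast hΓ ▸ hn
      have h2 := Real.rpow_le_rpow (Real.rpow_nonneg hpos _) h1 hαpos.le
      rwa [← Real.rpow_mul hpos, one_div, inv_mul_cancel₀ (ne_of_gt hαpos),
        Real.rpow_one] at h2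
    have hmn : (n:ℝ)^α ≤ ((m + n : ℕ) : ℝ)^α := by
      apply Real.rpow_le_rpow (Nat.cast_nonneg n) _ hαpos.le
      exact_mod_cast Nat.le_add_left n m
    simp only [hxdef] at hnx
    linarith
end

section
/- Almost surely, S_n ≤ n^α for all sufficiently large n. Consequently M_α := sup_{n≥0}(S_n − n^α) is almost surely finite and the supremum is almost surely attained at some n ≥ 0. -/
open MeasureTheory ProbabilityTheory Real

lemma exp_le_one_add_add (u : ℝ) : exp u ≤ 1 + u + u^2 * exp |u| := by
  rcases le_or_gt 0 u with hu | hu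
  · rw [abs_of_nonneg hu]
    have h1 : Real.exp u * Real.exp (-u) = 1 := by rw [← Real.exp_add]; simp
    have h2 : -u + 1 ≤ Real.exp (-u) := Real.add_one_le_exp _
    nlinarith [Real.exp_pos u, Real.exp_pos (-u), sq_nonneg u,
      mul_nonneg hu (Real.exp_pos u).le, mul_le_mul_of_nonneg_left h2 (Real.exp_pos u).le]
  · rw [abs_of_neg hu]
    have h1 : Real.exp u * Real.exp (-u) = 1 := by rw [← Real.exp_add]; simp
    have h2 : u + 1 ≤ Real.exp u := Real.add_one_le_exp _
    have h3 : -u + 1 ≤ Real.exp (-u) := Real.add_one_le_exp _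
    nlinarith [Real.exp_pos u, Real.exp_pos (-u), sq_nonneg u,
      mul_le_mul_of_nonneg_left h3 (Real.exp_pos u).le,
      mul_le_mul_of_nonneg_left h3 (mul_nonneg (neg_pos.2 hu).le (Real.exp_pos (-u)).le),
      sq_nonneg (u * Real.exp (-u))]

lemma sq_le_four_mul_exp {y : ℝ} (hy : 0 ≤ y) : y^2 ≤ 4 * exp y := by
  have h := Real.add_one_le_exp (y/2)
  have h2 : (y/2 + 1)^2 ≤ (Real.exp (y/2))^2 := by
    apply sq_le_sq' <;> nlinarith [Real.exp_pos (y/2)]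
  have h3 : Real.exp (y/2) ^ 2 = Real.exp y := by
    rw [← Real.exp_nat_mul]; congr 1; push_cast; ring
  nlinarith [h2, h3]

lemma mgf_quadratic_bound {Ω : Type*} [MeasurableSpace Ω] (P : Measure Ω)
    [IsProbabilityMeasure P] (Y : Ω → ℝ) (hY : Measurable Y)
    (hmean : ∫ ω, Y ω ∂P = 0) (δ : ℝ) (hδ : 0 < δ)
    (hmgf : ∀ θ : ℝ, |θ| < δ → Integrable (fun ω => exp (θ * Y ω)) P) :
    ∃ C : ℝ, 0 ≤ C ∧ ∀ t : ℝ, 0 < t → t ≤ δ/4 → mgf Y P t ≤ exp (C * t^2) := by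
  have habs1 : |δ/2| < δ := by rw [abs_of_pos (by linarith)]; linarith
  have habs2 : |(-(δ/2))| < δ := by rw [abs_neg, abs_of_pos (by linarith)]; linarith
  have hEint : Integrable (fun ω => exp ((δ/2) * Y ω) + exp (-(δ/2) * Y ω)) P :=
    (hmgf (δ/2) habs1).add (hmgf (-(δ/2)) habs2)
  have hEnn : ∀ ω, 0 ≤ exp ((δ/2) * Y ω) + exp (-(δ/2) * Y ω) := fun ω => by positivity
  have hEabs : ∀ x : ℝ, Real.exp ((δ/2) * |x|) ≤ exp ((δ/2) * x) + exp (-(δ/2) * x) := by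
    intro x
    rcases abs_cases x with ⟨h, _⟩ | ⟨h, _⟩ <;> rw [h]
    · nlinarith [Real.exp_pos (-(δ/2) * x)]
    · rw [show (δ/2) * -x = -(δ/2) * x by ring]
      nlinarith [Real.exp_pos ((δ/2) * x)]
  -- integrability of Y
  have hYint : Integrable Y P := by
    refine Integrable.mono (hEint.const_mul (2/δ)) hY.aestronglyMeasurable ?_
    filter_upwards with ω
    have ha : (δ/2) * |Y ω| ≤ Real.exp ((δ/2) * |Y ω|) := by
      linarith [Real.add_one_le_exp ((δ/2) * |Y ω|)]
    have hb := (ha.trans (hEabs (Y ω)))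
    rw [Real.norm_eq_abs, Real.norm_eq_abs]
    rw [abs_of_nonneg (by positivity : (0:ℝ) ≤ 2/δ * (exp ((δ/2) * Y ω) + exp (-(δ/2) * Y ω)))]
    calc |Y ω| = (2/δ) * ((δ/2) * |Y ω|) := by field_simp
    _ ≤ (2/δ) * (exp ((δ/2) * Y ω) + exp (-(δ/2) * Y ω)) := by
        apply mul_le_mul_of_nonneg_left hb (by positivity)
  -- integrability of g
  set g : Ω → ℝ := fun ω => (Y ω)^2 * Real.exp ((δ/4) * |Y ω|) with hg
  have hgmeas : Measurable g := ((hY.pow_const 2).mul ((measurable_const.mul hY.abs).exp))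
  have hgbound : ∀ x : ℝ, x^2 * Real.exp ((δ/4) * |x|) ≤
      (64/δ^2) * (exp ((δ/2) * x) + exp (-(δ/2) * x)) := by
    intro x
    have h1 : ((δ/4) * |x|)^2 ≤ 4 * Real.exp ((δ/4) * |x|) :=
      sq_le_four_mul_exp (by positivity)
    have h2 : x^2 ≤ (64/δ^2) * Real.exp ((δ/4) * |x|) := by
      have : δ^2 * x^2 / 16 ≤ 4 * Real.exp ((δ/4) * |x|) := by
        nlinarith [sq_abs x]
      rw [div_mul_eq_mul_div]
      rw [le_div_iff₀ (by positivity : (0:ℝ) < δ^2)]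
      nlinarith
    have h3 : Real.exp ((δ/4) * |x|) * Real.exp ((δ/4) * |x|) = Real.exp ((δ/2) * |x|) := by
      rw [← Real.exp_add]; congr 1; ring
    calc x^2 * Real.exp ((δ/4) * |x|)
        ≤ ((64/δ^2) * Real.exp ((δ/4) * |x|)) * Real.exp ((δ/4) * |x|) := by
          apply mul_le_mul_of_nonneg_right h2 (Real.exp_pos _).le
    _ = (64/δ^2) * Real.exp ((δ/2) * |x|) := by rw [mul_assoc, h3]
    _ ≤ (64/δ^2) * (exp ((δ/2) * x) + exp (-(δ/2) * x)) := by
          apply mul_le_mul_of_nonneg_left (hEabs x) (by positivity)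
  have hgint : Integrable g P := by
    refine Integrable.mono (hEint.const_mul (64/δ^2)) hgmeas.aestronglyMeasurable ?_
    filter_upwards with ω
    rw [Real.norm_eq_abs, Real.norm_eq_abs,
      abs_of_nonneg (mul_nonneg (sq_nonneg _) (Real.exp_pos _).le),
      abs_of_nonneg (by positivity : (0:ℝ) ≤ 64/δ^2 * (exp ((δ/2) * Y ω) + exp (-(δ/2) * Y ω)))]
    exact hgbound (Y ω)
  refine ⟨∫ ω, g ω ∂P, integral_nonneg fun ω => mul_nonneg (sq_nonneg _) (Real.exp_pos _).le,
    fun t ht ht' => ?_⟩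
  set C := ∫ ω, g ω ∂P with hC
  have hmgf_t : Integrable (fun ω => exp (t * Y ω)) P :=
    hmgf t (by rw [abs_of_pos ht]; linarith)
  have hpt : ∀ ω, exp (t * Y ω) ≤ 1 + t * Y ω + t^2 * g ω := by
    intro ω
    have h0 := exp_le_one_add_add (t * Y ω)
    have h1 : |t * Y ω| = t * |Y ω| := by rw [abs_mul, abs_of_pos ht]
    have h2 : Real.exp (t * |Y ω|) ≤ Real.exp ((δ/4) * |Y ω|) :=
      Real.exp_le_exp.2 (mul_le_mul_of_nonneg_right ht' (abs_nonneg _))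
    have h3 : (t * Y ω)^2 * Real.exp |t * Y ω| ≤ t^2 * g ω := by
      rw [h1, hg, mul_pow]
      calc t^2 * (Y ω)^2 * Real.exp (t * |Y ω|)
          ≤ t^2 * (Y ω)^2 * Real.exp ((δ/4) * |Y ω|) := by
            apply mul_le_mul_of_nonneg_left h2 (by positivity)
      _ = t^2 * ((Y ω)^2 * Real.exp ((δ/4) * |Y ω|)) := by ring
    linarith
  have hRint : Integrable (fun ω => 1 + t * Y ω + t^2 * g ω) P :=
    ((integrable_const 1).add (hYint.const_mul t)).add (hgint.const_mul (t^2))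
  have hle : mgf Y P t ≤ ∫ ω, (1 + t * Y ω + t^2 * g ω) ∂P := by
    rw [ProbabilityTheory.mgf]
    exact integral_mono hmgf_t hRint hpt
  have hint1 : Integrable (fun ω => 1 + t * Y ω) P := (integrable_const 1).add (hYint.const_mul t)
  have hint2 : Integrable (fun ω => t^2 * g ω) P := hgint.const_mul (t^2)
  have heq : ∫ ω, (1 + t * Y ω + t^2 * g ω) ∂P = 1 + C * t^2 := by
    rw [integral_add hint1 hint2,
      integral_add (integrable_const 1) (hYint.const_mul t),
      integral_const, integral_const_mul, integral_const_mul, hmean]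
    simp [mul_comm, hC]
  have hfin : 1 + C * t^2 ≤ exp (C * t^2) := by
    linarith [Real.add_one_le_exp (C * t^2)]
  linarith [hle, heq ▸ hle]

lemma summable_exp_neg_rpow {a b : ℝ} (ha : 0 < a) (hb : 0 < b) :
    Summable (fun n : ℕ => Real.exp (-(a * (n:ℝ)^b))) := by
  obtain ⟨k, hk1, hkb⟩ : ∃ k : ℕ, 1 ≤ k ∧ 2 ≤ (k:ℝ) * b := by
    refine ⟨⌈2/b⌉₊, Nat.one_le_ceil_iff.2 (by positivity), ?_⟩
    have h : 2/b ≤ (⌈2/b⌉₊:ℝ) := Nat.le_ceil _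
    calc (2:ℝ) = (2/b) * b := by field_simp
    _ ≤ (⌈2/b⌉₊:ℝ) * b := by gcongr
  -- key bound for n ≥ 1
  have key : ∀ n : ℕ, 1 ≤ n → Real.exp (-(a * (n:ℝ)^b)) ≤ ((k:ℝ)/a)^k * (1 / (n:ℝ)^2) := by
    intro n hn
    have hn0 : (1:ℝ) ≤ (n:ℝ) := by exact_mod_cast hn
    have hnb : (0:ℝ) < (n:ℝ)^b := Real.rpow_pos_of_pos (by linarith) b
    set y : ℝ := a * (n:ℝ)^b with hy
    have hy0 : 0 < y := by positivity
    -- exp y ≥ (y/k)^k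
    have h1 : y/(k:ℝ) ≤ Real.exp (y/(k:ℝ)) := by
      nlinarith [Real.add_one_le_exp (y/(k:ℝ))]
    have hyk : 0 < y/(k:ℝ) := by positivity
    have h2 : (y/(k:ℝ))^k ≤ (Real.exp (y/(k:ℝ)))^k :=
      pow_le_pow_left₀ hyk.le h1 k
    have h3 : (Real.exp (y/(k:ℝ)))^k = Real.exp y := by
      rw [← Real.exp_nat_mul]
      congr 1
      field_simp
    have h4 : Real.exp (-y) ≤ ((k:ℝ)/y)^k := by
      rw [Real.exp_neg]
      rw [← h3] at *
      have hek : 0 < (Real.exp (y/(k:ℝ)))^k := by positivity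
      have h5 : ((k:ℝ)/y)^k = ((y/(k:ℝ))^k)⁻¹ := by
        rw [← inv_pow]
        congr 1
        field_simp
      rw [h5]
      exact inv_anti₀ (pow_pos hyk k) h2
    -- ((k:ℝ)/y)^k ≤ (k/a)^k / n^2
    have h6 : ((k:ℝ)/y)^k = ((k:ℝ)/a)^k * (1/((n:ℝ)^b)^k) := by
      rw [hy, div_mul_eq_div_div, div_pow ((k:ℝ)/a), div_eq_mul_one_div]
    have h7 : (n:ℝ)^(2:ℝ) ≤ ((n:ℝ)^b)^k := by
      rw [← Real.rpow_natCast ((n:ℝ)^b) k, ← Real.rpow_mul (by linarith)]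
      exact Real.rpow_le_rpow_of_exponent_le hn0 (by rw [mul_comm]; exact hkb)
    have h8 : (1:ℝ)/((n:ℝ)^b)^k ≤ 1/(n:ℝ)^2 := by
      rw [show ((n:ℝ)^2 : ℝ) = (n:ℝ)^(2:ℝ) by rw [← Real.rpow_natCast (n:ℝ) 2]; norm_num]
      apply one_div_le_one_div_of_le (Real.rpow_pos_of_pos (by linarith) 2) h7
    calc Real.exp (-y) ≤ ((k:ℝ)/y)^k := h4
    _ = ((k:ℝ)/a)^k * (1/((n:ℝ)^b)^k) := h6
    _ ≤ ((k:ℝ)/a)^k * (1/(n:ℝ)^2) := by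
        apply mul_le_mul_of_nonneg_left h8 (by positivity)
  rw [← summable_nat_add_iff (f := fun n : ℕ => Real.exp (-(a * (n:ℝ)^b))) 1]
  have hsum : Summable (fun n : ℕ => ((k:ℝ)/a)^k * (1/((n+1:ℕ):ℝ)^2)) := by
    apply Summable.mul_left
    have : Summable (fun n : ℕ => 1 / (n:ℝ)^(2:ℕ)) := Real.summable_one_div_nat_pow.2 one_lt_two
    exact (summable_nat_add_iff (f := fun n : ℕ => 1 / (n:ℝ)^(2:ℕ)) 1).2 this
  apply Summable.of_nonneg_of_le (fun n => (Real.exp_pos _).le) _ hsum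
  intro n
  exact key (n+1) (Nat.le_add_left 1 n)

/-- Almost surely `S_n ≤ n^α` for all sufficiently large `n`; consequently
`M_α = sup_{n ≥ 0} (S_n - n^α)` is almost surely finite and the supremum is
almost surely attained. -/
theorem max_over_nonlinear_boundary_attained
    {Ω : Type*} [MeasurableSpace Ω] (P : Measure Ω) [IsProbabilityMeasure P]
    (X : ℕ → Ω → ℝ) (hmeas : ∀ i, Measurable (X i))
    (hindep : iIndepFun X P)
    (hident : ∀ i, IdentDistrib (X i) (X 0) P P)
    (hmean : ∫ ω, X 0 ω ∂P = 0)
    (δ : ℝ) (hδ : 0 < δ)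
    (hmgf : ∀ θ : ℝ, |θ| < δ → Integrable (fun ω => exp (θ * X 0 ω)) P)
    (α : ℝ) (hα : 1/2 < α) (hα1 : α < 1)
    (S : ℕ → Ω → ℝ) (hS : ∀ n ω, S n ω = ∑ i ∈ Finset.range n, X i ω) :
    ∀ᵐ ω ∂P,
      (∃ N : ℕ, ∀ n : ℕ, N ≤ n → S n ω ≤ (n:ℝ)^α) ∧
      BddAbove (Set.range fun n : ℕ => S n ω - (n:ℝ)^α) ∧
      ∃ m : ℕ, ∀ n : ℕ, S n ω - (n:ℝ)^α ≤ S m ω - (m:ℝ)^α := by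
  obtain ⟨C, hC0, hCbound⟩ := mgf_quadratic_bound P (X 0) (hmeas 0) hmean δ hδ hmgf
  set c : ℝ := min (δ/4) (1/(2*(C+1))) with hc
  have hc0 : 0 < c := lt_min (by linarith) (by positivity)
  have hcδ : c ≤ δ/4 := min_le_left _ _
  have hcC : c * C ≤ 1/2 := by
    have h1 : c ≤ 1/(2*(C+1)) := min_le_right _ _
    have h2 : c * C ≤ (1/(2*(C+1))) * C := mul_le_mul_of_nonneg_right h1 hC0
    have hpos : (0:ℝ) < 2*(C+1) := by positivity
    have h3 : (1/(2*(C+1))) * C ≤ 1/2 := by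
      rw [div_mul_eq_mul_div, one_mul, div_le_iff₀ hpos]
      nlinarith
    linarith
  set b : ℝ := 2*α - 1 with hb
  have hb0 : 0 < b := by rw [hb]; linarith
  set s : ℕ → Set Ω := fun n => {ω | (n:ℝ)^α ≤ S n ω} with hs
  -- tail bound
  have hbound : ∀ n : ℕ, (P (s n)).toReal ≤ Real.exp (-(c/2 * (n:ℝ)^b)) := by
    intro n
    rcases Nat.eq_zero_or_pos n with rfl | hn
    · have h0 : ((0:ℕ):ℝ)^b = 0 := by
        rw [Nat.cast_zero]; exact Real.zero_rpow hb0.ne'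
      rw [h0]
      simp only [mul_zero, neg_zero, Real.exp_zero]
      calc (P (s 0)).toReal ≤ (P Set.univ).toReal :=
        ENNReal.toReal_mono (measure_ne_top _ _) (measure_mono (Set.subset_univ _))
      _ = 1 := by simp
    · have hn1 : (1:ℝ) ≤ (n:ℝ) := by exact_mod_cast hn
      have hn0 : (0:ℝ) < (n:ℝ) := by linarith
      set t : ℝ := c * (n:ℝ)^(α-1) with htdef
      have ht0 : 0 < t := mul_pos hc0 (Real.rpow_pos_of_pos hn0 _)
      have htle : t ≤ c := by
        rw [htdef]
        calc c * (n:ℝ)^(α-1) ≤ c * 1 := by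
              apply mul_le_mul_of_nonneg_left _ hc0.le
              exact Real.rpow_le_one_of_one_le_of_nonpos hn1 (by linarith)
        _ = c := mul_one c
      have htδ : |t| < δ := by rw [abs_of_pos ht0]; linarith
      have hintXi : ∀ i, Integrable (fun ω => exp (t * X i ω)) P := fun i =>
        ((hident i).comp ((measurable_id.const_mul t).exp)).integrable_iff.2 (hmgf t htδ)
      have hSfun : S n = ∑ i ∈ Finset.range n, X i := by
        funext ω; rw [hS]; simp
      have hintS : Integrable (fun ω => exp (t * S n ω)) P := by
        rw [hSfun]
        exact hindep.integrable_exp_mul_sum hmeas (fun i _ => hintXi i)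
      have hcher := measure_ge_le_exp_mul_mgf ((n:ℝ)^α) ht0.le hintS
      have hmgfS : mgf (S n) P t = (mgf (X 0) P t)^n := by
        rw [hSfun, hindep.mgf_sum hmeas]
        rw [Finset.prod_congr rfl (fun i _ => ?_), Finset.prod_const, Finset.card_range]
        show mgf (X i) P t = mgf (X 0) P t
        rw [mgf, mgf]
        exact ((hident i).comp ((measurable_id.const_mul t).exp)).integral_eq
      have hX0 : mgf (X 0) P t ≤ exp (C * t^2) := hCbound t ht0 (le_trans htle hcδ)
      have hpow : (mgf (X 0) P t)^n ≤ (exp (C * t^2))^n :=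
        pow_le_pow_left₀ (mgf_nonneg) hX0 n
      have hexpn : (exp (C * t^2))^n = exp ((n:ℝ) * (C * t^2)) := by
        rw [← Real.exp_nat_mul]
      -- exponent algebra
      have ha1 : t * (n:ℝ)^α = c * (n:ℝ)^b := by
        rw [htdef, mul_assoc, ← Real.rpow_add hn0]
        congr 1
        rw [hb]; ring
      have ha2 : (n:ℝ) * t^2 = c^2 * (n:ℝ)^b := by
        rw [htdef, mul_pow]
        have e1 : ((n:ℝ)^(α-1))^2 = (n:ℝ)^(2*α-2) := by
          rw [← Real.rpow_natCast ((n:ℝ)^(α-1)) 2, ← Real.rpow_mul hn0.le]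
          congr 1; push_cast; ring
        rw [e1]
        have e2 : (n:ℝ) * (c^2 * (n:ℝ)^(2*α-2)) = c^2 * ((n:ℝ)^(1:ℝ) * (n:ℝ)^(2*α-2)) := by
          rw [Real.rpow_one]; ring
        rw [e2, ← Real.rpow_add hn0]
        congr 1
        rw [hb]; ring
      have hnb : (0:ℝ) ≤ (n:ℝ)^b := (Real.rpow_pos_of_pos hn0 b).le
      have hexp_le : -t * (n:ℝ)^α + (n:ℝ) * (C * t^2) ≤ -(c/2 * (n:ℝ)^b) := by
        have e3 : (n:ℝ) * (C * t^2) = C * (c^2 * (n:ℝ)^b) := by rw [← ha2]; ring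
        have e5 : (c*C - 1/2) * (c*(n:ℝ)^b) ≤ 0 :=
          mul_nonpos_of_nonpos_of_nonneg (by linarith) (mul_nonneg hc0.le hnb)
        nlinarith [e3, ha1, e5]
      calc (P (s n)).toReal ≤ exp (-t * (n:ℝ)^α) * mgf (S n) P t := hcher
      _ = exp (-t * (n:ℝ)^α) * (mgf (X 0) P t)^n := by rw [hmgfS]
      _ ≤ exp (-t * (n:ℝ)^α) * (exp (C * t^2))^n := by
          apply mul_le_mul_of_nonneg_left hpow (Real.exp_pos _).le
      _ = exp (-t * (n:ℝ)^α + (n:ℝ) * (C * t^2)) := by rw [hexpn, ← Real.exp_add]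
      _ ≤ exp (-(c/2 * (n:ℝ)^b)) := Real.exp_le_exp.2 hexp_le
  -- Borel–Cantelli
  have hsum : Summable (fun n : ℕ => Real.exp (-(c/2 * (n:ℝ)^b))) :=
    summable_exp_neg_rpow (by positivity) hb0
  have htsum : (∑' n, P (s n)) ≠ ⊤ := by
    have hle : ∀ n, P (s n) ≤ ENNReal.ofReal (Real.exp (-(c/2 * (n:ℝ)^b))) := by
      intro n
      rw [← ENNReal.ofReal_toReal (measure_ne_top P (s n))]
      exact ENNReal.ofReal_le_ofReal (hbound n)
    have := ENNReal.tsum_le_tsum hle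
    have heq : (∑' n : ℕ, ENNReal.ofReal (Real.exp (-(c/2 * (n:ℝ)^b))))
        = ENNReal.ofReal (∑' n : ℕ, Real.exp (-(c/2 * (n:ℝ)^b))) :=
      (ENNReal.ofReal_tsum_of_nonneg (fun n => (Real.exp_pos _).le) hsum).symm
    rw [heq] at this
    exact ne_top_of_le_ne_top ENNReal.ofReal_ne_top this
  have hae := MeasureTheory.ae_eventually_notMem htsum
  filter_upwards [hae] with ω hω
  obtain ⟨N, hN⟩ := Filter.eventually_atTop.1 hω
  have hle : ∀ n : ℕ, N ≤ n → S n ω ≤ (n:ℝ)^α := by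
    intro n hn
    have := hN n hn
    simp only [hs, Set.mem_setOf_eq] at this
    exact (not_le.1 this).le
  set f : ℕ → ℝ := fun n => S n ω - (n:ℝ)^α with hf
  have hf0 : f 0 = 0 := by
    simp only [hf, hS 0 ω, Finset.range_zero, Finset.sum_empty, Nat.cast_zero,
      Real.zero_rpow (by linarith : α ≠ 0), sub_zero]
  obtain ⟨m, hm_mem, hm⟩ := Finset.exists_max_image (Finset.range (N+1)) f
    ⟨0, Finset.mem_range.2 (Nat.succ_pos N)⟩
  have hmax : ∀ n, f n ≤ f m := by
    intro n
    rcases le_or_gt n N with h | h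
    · exact hm n (Finset.mem_range.2 (Nat.lt_succ_of_le h))
    · have h1 : f n ≤ 0 := sub_nonpos.2 (hle n h.le)
      have h2 : 0 ≤ f m := hf0 ▸ hm 0 (Finset.mem_range.2 (Nat.succ_pos N))
      linarith
  refine ⟨⟨N, hle⟩, ⟨f m, ?_⟩, ⟨m, hmax⟩⟩
  rintro y ⟨n, rfl⟩
  exact hmax n
end

section
/- For every integer n ≥ 0, every integer t with 2^n ≤ t < 2^{n+1}, and every real s with s > a·t^α + b·t^{1−α}, one has exp(−θ_n·s + t·ψ(θ_n)) ≤ p(n)/4, where θ_n := a·2^{(α−1)n−2}. (This is the key likelihood-ratio bound showing the acceptance probability in Procedure A is well defined, i.e., at most 1.) -/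
open MeasureTheory ProbabilityTheory Real

open Filter in
lemma aux_summable_s6 (α a : ℝ) (hα : 1/2 < α) (ha : 0 < a) (c : ℝ) :
    Summable (fun m : ℕ => (2:ℝ)^m * Real.exp (-a^2 * (2:ℝ)^(2*(m:ℝ)*α - (m:ℝ) - c))) := by
  have hd : 0 < 2*α - 1 := by linarith
  set q : ℝ := (2:ℝ)^(2*α-1) with hqdef
  have hq1 : 1 < q := by
    rw [hqdef]
    exact Real.one_lt_rpow_iff_of_pos two_pos |>.mpr (Or.inl ⟨one_lt_two, hd⟩)
  have hqm : ∀ m:ℕ, (2:ℝ)^(2*(m:ℝ)*α - (m:ℝ) - c) = (2:ℝ)^(-c) * q^m := by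
    intro m
    rw [show 2*(m:ℝ)*α - (m:ℝ) - c = -c + (2*α-1)*(m:ℝ) by ring,
      Real.rpow_add two_pos, Real.rpow_mul (by norm_num : (0:ℝ) ≤ 2), Real.rpow_natCast]
  have htend : Tendsto (fun m:ℕ => a^2 * (2:ℝ)^(-c) * (q-1) * q^m) atTop atTop := by
    apply Tendsto.const_mul_atTop
    · have h1 : 0 < (2:ℝ)^(-c) := Real.rpow_pos_of_pos two_pos _
      have h2 : 0 < q - 1 := by linarith
      positivity
    · exact tendsto_pow_atTop_atTop_of_one_lt hq1
  have hev : ∀ᶠ m in atTop, Real.log 4 ≤ a^2 * (2:ℝ)^(-c) * (q-1) * q^m :=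
    htend.eventually_ge_atTop _
  apply summable_of_ratio_norm_eventually_le (show (1:ℝ)/2 < 1 by norm_num)
  filter_upwards [hev] with n hn
  rw [Real.norm_of_nonneg (by positivity), Real.norm_of_nonneg (by positivity)]
  have key : -a^2 * (2:ℝ)^(2*((n:ℝ)+1)*α - ((n:ℝ)+1) - c)
      ≤ -a^2 * (2:ℝ)^(2*(n:ℝ)*α - (n:ℝ) - c) - Real.log 4 := by
    have h1 : (2:ℝ)^(2*((n:ℝ)+1)*α - ((n:ℝ)+1) - c) = (2:ℝ)^(-c) * q^n * q := by
      rw [show 2*((n:ℝ)+1)*α - ((n:ℝ)+1) - c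
          = (2*((n+1:ℕ):ℝ)*α - ((n+1:ℕ):ℝ) - c) by push_cast; ring, hqm (n+1)]
      ring
    rw [h1, hqm n]
    nlinarith [hn, Real.rpow_pos_of_pos two_pos (-c), pow_pos (show (0:ℝ) < q by linarith) n]
  push_cast
  calc (2:ℝ)^(n+1) * Real.exp (-a^2 * (2:ℝ)^(2*((n:ℝ)+1)*α - ((n:ℝ)+1) - c))
      ≤ (2:ℝ)^(n+1) * Real.exp (-a^2 * (2:ℝ)^(2*(n:ℝ)*α - (n:ℝ) - c) - Real.log 4) :=
        mul_le_mul_of_nonneg_left (Real.exp_le_exp.mpr key) (by positivity)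
    _ = 1/2 * ((2:ℝ)^n * Real.exp (-a^2 * (2:ℝ)^(2*(n:ℝ)*α - (n:ℝ) - c))) := by
        rw [Real.exp_sub, Real.exp_log (by norm_num : (0:ℝ) < 4), pow_succ]
        ring

set_option maxHeartbeats 1000000 in

/-- The key likelihood-ratio bound for Procedure A: for `2^n ≤ t < 2^{n+1}` and
`s > a t^α + b t^{1-α}`, with `θ_n = a 2^{(α-1)n-2}`,
`exp(-θ_n s + t ψ(θ_n)) ≤ p(n)/4`. -/
theorem procedure_A_likelihood_ratio_bound
    {Ω : Type*} [MeasurableSpace Ω] (P : Measure Ω) [IsProbabilityMeasure P]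
    (X : ℕ → Ω → ℝ) (hmeas : ∀ i, Measurable (X i))
    (hindep : iIndepFun X P)
    (hident : ∀ i, IdentDistrib (X i) (X 0) P P)
    (hmean : ∫ ω, X 0 ω ∂P = 0)
    (δ : ℝ) (hδ : 0 < δ)
    (hmgf : ∀ θ : ℝ, |θ| < δ → Integrable (fun ω => exp (θ * X 0 ω)) P)
    (ψ : ℝ → ℝ) (hψdef : ∀ θ : ℝ, |θ| < δ → ψ θ = Real.log (∫ ω, exp (θ * X 0 ω) ∂P))
    (δ' : ℝ) (hδ'pos : 0 < δ') (hδ'le : δ' ≤ δ)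
    (hψ : ∀ θ : ℝ, |θ| < δ' → ψ θ ≤ θ ^ 2)
    (α a b : ℝ) (hα : 1/2 < α) (hα1 : α < 1)
    (ha0 : 0 < a) (ha : a < min (4 * δ') (1/2))
    (hb : b = (4 / a) *
      Real.log (4 * ∑' n : ℕ, (2:ℝ)^n * exp (-a^2 * (2:ℝ)^(2*(n:ℝ)*α - (n:ℝ) - 4))))
    (p : ℕ → ℝ)
    (hp : ∀ n : ℕ, p n = (2:ℝ)^n * exp (-a^2 * (2:ℝ)^(2*(n:ℝ)*α - (n:ℝ) - 3)) /
      ∑' m : ℕ, (2:ℝ)^m * exp (-a^2 * (2:ℝ)^(2*(m:ℝ)*α - (m:ℝ) - 3))) :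
    ∀ n t : ℕ, 2^n ≤ t → t < 2^(n+1) →
      ∀ s : ℝ, a * (t:ℝ)^α + b * (t:ℝ)^(1-α) < s →
        exp (-(a * (2:ℝ)^((α-1)*(n:ℝ) - 2)) * s
            + (t:ℝ) * ψ (a * (2:ℝ)^((α-1)*(n:ℝ) - 2))) ≤ p n / 4 := by
  intro n t ht1 ht2 s hs
  have ha1 : a < 4 * δ' := lt_of_lt_of_le ha (min_le_left _ _)
  have ha2 : a < 1/2 := lt_of_lt_of_le ha (min_le_right _ _)
  -- sums
  set f : ℕ → ℝ := fun m => (2:ℝ)^m * exp (-a^2 * (2:ℝ)^(2*(m:ℝ)*α - (m:ℝ) - 3)) with hfdef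
  set g : ℕ → ℝ := fun m => (2:ℝ)^m * exp (-a^2 * (2:ℝ)^(2*(m:ℝ)*α - (m:ℝ) - 4)) with hgdef
  have hf : Summable f := aux_summable_s6 α a hα ha0 3
  have hg : Summable g := aux_summable_s6 α a hα ha0 4
  have hfg : ∀ m, f m ≤ g m := by
    intro m
    have h1 : (2:ℝ)^(2*(m:ℝ)*α - (m:ℝ) - 4) ≤ (2:ℝ)^(2*(m:ℝ)*α - (m:ℝ) - 3) :=
      Real.rpow_le_rpow_of_exponent_le one_le_two (by linarith)
    have h2 : -a^2 * (2:ℝ)^(2*(m:ℝ)*α - (m:ℝ) - 3) ≤ -a^2 * (2:ℝ)^(2*(m:ℝ)*α - (m:ℝ) - 4) := by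
      nlinarith [sq_nonneg a]
    exact mul_le_mul_of_nonneg_left (Real.exp_le_exp.mpr h2) (by positivity)
  have hSfpos : 0 < ∑' m, f m :=
    Summable.tsum_pos hf (fun m => by positivity) 0 (by positivity)
  have hSle : (∑' m, f m) ≤ ∑' m, g m := Summable.tsum_le_tsum hfg hf hg
  have hSgpos : 0 < ∑' m, g m := lt_of_lt_of_le hSfpos hSle
  -- b facts
  have hg0 : (1:ℝ) ≤ 4 * ∑' m, g m := by
    have hle : g 0 ≤ ∑' m, g m := Summable.le_tsum hg 0 (fun j _ => by positivity)
    have hg0v : g 0 = exp (-a^2 * (1/16)) := by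
      have h216 : (2:ℝ)^(2*((0:ℕ):ℝ)*α - ((0:ℕ):ℝ) - 4) = 1/16 := by
        rw [show 2*((0:ℕ):ℝ)*α - ((0:ℕ):ℝ) - 4 = ((-4:ℤ):ℝ) by push_cast; ring,
          Real.rpow_intCast]
        norm_num
      simp only [hgdef, pow_zero, one_mul, h216]
    have hexp : (1:ℝ)/4 ≤ exp (-a^2 * (1/16)) := by
      have := Real.add_one_le_exp (-a^2 * (1/16))
      nlinarith
    rw [hg0v] at hle
    linarith
  have hbnn : 0 ≤ b := by
    rw [hb]
    have : 0 ≤ Real.log (4 * ∑' m, g m) := Real.log_nonneg hg0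
    positivity
  have hab4 : a * b / 4 = Real.log (4 * ∑' m, g m) := by
    rw [hb]; field_simp
  -- θ facts
  set θ : ℝ := a * (2:ℝ)^((α-1)*(n:ℝ) - 2) with hθdef
  have hθpos : 0 < θ := mul_pos ha0 (Real.rpow_pos_of_pos two_pos _)
  have h2m2 : (2:ℝ)^((-2:ℝ)) = 1/4 := by
    rw [show (-2:ℝ) = ((-2:ℤ):ℝ) by norm_num, Real.rpow_intCast]; norm_num
  have hexple : (2:ℝ)^((α-1)*(n:ℝ) - 2) ≤ 1/4 := by
    rw [← h2m2]
    apply Real.rpow_le_rpow_of_exponent_le one_le_two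
    nlinarith [Nat.cast_nonneg (α := ℝ) n]
  have hθδ' : |θ| < δ' := by
    rw [abs_of_pos hθpos, hθdef]
    nlinarith [Real.rpow_pos_of_pos two_pos ((α-1)*(n:ℝ) - 2)]
  have hψθ : ψ θ ≤ θ^2 := hψ θ hθδ'
  -- t facts
  have h2nt : (2:ℝ)^n ≤ (t:ℝ) := by exact_mod_cast ht1
  have ht2' : (t:ℝ) < (2:ℝ)^(n+1) := by exact_mod_cast ht2
  have htpos : (0:ℝ) < t := lt_of_lt_of_le (by positivity) h2nt
  have htα : (2:ℝ)^((n:ℝ)*α) ≤ (t:ℝ)^α := by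
    rw [show (2:ℝ)^((n:ℝ)*α) = ((2:ℝ)^(n:ℝ))^α by
      rw [← Real.rpow_mul (by norm_num : (0:ℝ) ≤ 2)], Real.rpow_natCast]
    exact Real.rpow_le_rpow (by positivity) h2nt (by linarith)
  have ht1α : (2:ℝ)^((n:ℝ)*(1-α)) ≤ (t:ℝ)^(1-α) := by
    rw [show (2:ℝ)^((n:ℝ)*(1-α)) = ((2:ℝ)^(n:ℝ))^(1-α) by
      rw [← Real.rpow_mul (by norm_num : (0:ℝ) ≤ 2)], Real.rpow_natCast]
    exact Real.rpow_le_rpow (by positivity) h2nt (by linarith)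
  -- exponent arithmetic
  set E : ℝ := a^2 * (2:ℝ)^(2*(n:ℝ)*α - (n:ℝ) - 3) with hEdef
  have hA : 2 * E ≤ θ * (a * (t:ℝ)^α) := by
    have e1 : (2:ℝ)^((α-1)*(n:ℝ)-2) * (2:ℝ)^((n:ℝ)*α)
        = 2 * (2:ℝ)^(2*(n:ℝ)*α-(n:ℝ)-3) := by
      rw [← Real.rpow_add two_pos,
        show (α-1)*(n:ℝ)-2+(n:ℝ)*α = (2*(n:ℝ)*α-(n:ℝ)-3) + 1 by ring,
        Real.rpow_add two_pos, Real.rpow_one]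
      ring
    have h3 : θ * (a * (2:ℝ)^((n:ℝ)*α)) ≤ θ * (a * (t:ℝ)^α) := by
      apply mul_le_mul_of_nonneg_left _ hθpos.le
      exact mul_le_mul_of_nonneg_left htα ha0.le
    calc 2 * E = θ * (a * (2:ℝ)^((n:ℝ)*α)) := by rw [hθdef, hEdef]; linear_combination (-a^2) * e1
      _ ≤ θ * (a * (t:ℝ)^α) := h3
  have hB : a * b / 4 ≤ θ * (b * (t:ℝ)^(1-α)) := by
    have e2 : (2:ℝ)^((α-1)*(n:ℝ)-2) * (2:ℝ)^((n:ℝ)*(1-α)) = 1/4 := by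
      rw [← Real.rpow_add two_pos,
        show (α-1)*(n:ℝ)-2+(n:ℝ)*(1-α) = (-2:ℝ) by ring, h2m2]
    have h3 : θ * (b * (2:ℝ)^((n:ℝ)*(1-α))) ≤ θ * (b * (t:ℝ)^(1-α)) := by
      apply mul_le_mul_of_nonneg_left _ hθpos.le
      exact mul_le_mul_of_nonneg_left ht1α hbnn
    calc a * b / 4 = θ * (b * (2:ℝ)^((n:ℝ)*(1-α))) := by rw [hθdef]; linear_combination (-(a*b)) * e2
      _ ≤ θ * (b * (t:ℝ)^(1-α)) := h3
  have hC : (t:ℝ) * θ^2 ≤ E := by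
    have e3 : θ^2 = a^2 * (2:ℝ)^(((α-1)*(n:ℝ)-2) + ((α-1)*(n:ℝ)-2)) := by
      rw [Real.rpow_add two_pos, hθdef]; ring
    have e4 : (2:ℝ)^(n+1) * (2:ℝ)^(((α-1)*(n:ℝ)-2) + ((α-1)*(n:ℝ)-2))
        = (2:ℝ)^(2*(n:ℝ)*α-(n:ℝ)-3) := by
      rw [← Real.rpow_natCast 2 (n+1), ← Real.rpow_add two_pos]
      congr 1
      push_cast; ring
    calc (t:ℝ) * θ^2 ≤ (2:ℝ)^(n+1) * θ^2 :=
        mul_le_mul_of_nonneg_right ht2'.le (sq_nonneg θ)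
      _ = E := by rw [e3, hEdef]; linear_combination a^2 * e4
  have hmain : -θ * s + (t:ℝ) * ψ θ ≤ -E - a*b/4 := by
    have h1 : θ * (a * (t:ℝ)^α + b * (t:ℝ)^(1-α)) ≤ θ * s :=
      mul_le_mul_of_nonneg_left hs.le hθpos.le
    have h2 : (t:ℝ) * ψ θ ≤ (t:ℝ) * θ^2 :=
      mul_le_mul_of_nonneg_left hψθ htpos.le
    have hdist : θ * (a * (t:ℝ)^α + b * (t:ℝ)^(1-α))
        = θ * (a * (t:ℝ)^α) + θ * (b * (t:ℝ)^(1-α)) := by ring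
    rw [hdist] at h1
    linarith [h1, h2, hA, hB, hC]
  -- conclude
  rw [hp n]
  calc exp (-θ * s + (t:ℝ) * ψ θ) ≤ exp (-E - a*b/4) := Real.exp_le_exp.mpr hmain
    _ = exp (-E) / (4 * ∑' m, g m) := by
        rw [Real.exp_sub, hab4, Real.exp_log (by positivity)]
    _ ≤ ((2:ℝ)^n * exp (-E) / ∑' m, f m) / 4 := by
        rw [div_div]
        have h2n1 : (1:ℝ) ≤ 2^n := by exact_mod_cast Nat.one_le_two_pow (n := n)
        apply div_le_div₀ (by positivity) _ (by positivity) (by linarith)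
        nlinarith [Real.exp_pos (-E), h2n1]
    _ = ((2:ℝ)^n * exp (-a^2 * (2:ℝ)^(2*(n:ℝ)*α-(n:ℝ)-3)) / ∑' m, f m) / 4 := by
        rw [hEdef]; ring_nf
end

section
/- For every r > 0, E[T_1^r · 1{T_1 < ∞}] < ∞, i.e., the first record-breaking time restricted to the event that it is finite has finite moments of every order. -/
open MeasureTheory ProbabilityTheory Real

open Filter in

lemma summable_rpow_mul_exp_neg_rpow (r K c : ℝ) (hK : 0 < K) (hc : 0 < c) :
    Summable (fun n : ℕ => (n:ℝ) ^ r * Real.exp (-K * (n:ℝ) ^ c)) := by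
  have h1 : Tendsto (fun x : ℝ => x ^ ((r+2)/c) * Real.exp (-K * x)) atTop (nhds 0) :=
    tendsto_rpow_mul_exp_neg_mul_atTop_nhds_zero _ K hK
  have h2 : Tendsto (fun x : ℝ => x ^ c) atTop atTop := tendsto_rpow_atTop hc
  have h3 : Tendsto (fun x : ℝ => x ^ (r+2) * Real.exp (-K * x ^ c)) atTop (nhds 0) := by
    refine (h1.comp h2).congr' ?_
    filter_upwards [eventually_ge_atTop (0:ℝ)] with x hx
    have : (x ^ c) ^ ((r+2)/c) = x ^ (r+2) := by
      rw [← Real.rpow_mul hx]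
      congr 1
      field_simp
    simp only [Function.comp_apply, this]
  have h4 : Tendsto (fun n : ℕ => ((n:ℝ)) ^ (r+2) * Real.exp (-K * (n:ℝ) ^ c)) atTop (nhds 0) :=
    h3.comp tendsto_natCast_atTop_atTop
  have hev : ∀ᶠ n : ℕ in atTop, (n:ℝ) ^ (r+2) * Real.exp (-K * (n:ℝ) ^ c) < 1 :=
    h4.eventually_lt_const one_pos
  refine summable_of_isBigO_nat (Real.summable_nat_rpow.mpr (by norm_num : (-2:ℝ) < -1)) ?_
  rw [Asymptotics.isBigO_iff]
  refine ⟨1, ?_⟩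
  filter_upwards [hev, eventually_ge_atTop 1] with n h1n hn
  have hnpos : (0:ℝ) < (n:ℝ) := by exact_mod_cast hn
  have hsplit : (n:ℝ) ^ r = (n:ℝ) ^ (r+2) * (n:ℝ) ^ (-2:ℝ) := by
    rw [← Real.rpow_add hnpos]; ring_nf
  have hnn : 0 ≤ (n:ℝ) ^ (r+2) * Real.exp (-K * (n:ℝ) ^ c) :=
    mul_nonneg (Real.rpow_nonneg hnpos.le _) (Real.exp_pos _).le
  rw [Real.norm_eq_abs, Real.norm_eq_abs, abs_of_nonneg
      (mul_nonneg (Real.rpow_nonneg hnpos.le _) (Real.exp_pos _).le),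
    abs_of_nonneg (Real.rpow_nonneg hnpos.le _), hsplit, one_mul]
  calc (n:ℝ) ^ (r+2) * (n:ℝ) ^ (-2:ℝ) * Real.exp (-K * (n:ℝ) ^ c)
      = ((n:ℝ) ^ (r+2) * Real.exp (-K * (n:ℝ) ^ c)) * (n:ℝ) ^ (-2:ℝ) := by ring
    _ ≤ 1 * (n:ℝ) ^ (-2:ℝ) := by
        exact mul_le_mul_of_nonneg_right h1n.le (Real.rpow_nonneg hnpos.le _)
    _ = (n:ℝ) ^ (-2:ℝ) := one_mul _


lemma chernoff_step
    {Ω : Type*} [MeasurableSpace Ω] (P : Measure Ω) [IsProbabilityMeasure P]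
    (X : ℕ → Ω → ℝ) (hmeas : ∀ i, Measurable (X i))
    (hindep : iIndepFun X P)
    (hident : ∀ i, IdentDistrib (X i) (X 0) P P)
    (δ : ℝ) (hδ : 0 < δ)
    (hmgf : ∀ θ : ℝ, |θ| < δ → Integrable (fun ω => Real.exp (θ * X 0 ω)) P)
    (ψ : ℝ → ℝ) (hψdef : ∀ θ : ℝ, |θ| < δ → ψ θ = Real.log (∫ ω, Real.exp (θ * X 0 ω) ∂P))
    (δ' : ℝ) (hδ'pos : 0 < δ') (hδ'le : δ' ≤ δ)
    (hψ : ∀ θ : ℝ, |θ| < δ' → ψ θ ≤ θ ^ 2)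
    (α a b : ℝ) (hα : 1/2 < α) (hα1 : α < 1)
    (ha0 : 0 < a) (ha4 : a < 4 * δ')
    (S : ℕ → Ω → ℝ) (hS : ∀ n ω, S n ω = ∑ i ∈ Finset.range n, X i ω)
    (n : ℕ) (hn : 1 ≤ n) :
    (P {ω | a * (n:ℝ)^α + b * (n:ℝ)^(1-α) ≤ S n ω}).toReal ≤
      Real.exp (a * |b| / 4) * Real.exp (-(3/16 * a^2) * (n:ℝ)^(2*α-1)) := by
  have hn0 : (0:ℝ) < (n:ℝ) := by exact_mod_cast hn
  have hn1 : (1:ℝ) ≤ (n:ℝ) := by exact_mod_cast hn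
  set θ : ℝ := a * (n:ℝ) ^ (α-1) / 4 with hθdef
  have hppos : 0 < (n:ℝ) ^ (α-1) := Real.rpow_pos_of_pos hn0 _
  have hple : (n:ℝ) ^ (α-1) ≤ 1 :=
    Real.rpow_le_one_of_one_le_of_nonpos hn1 (by linarith)
  have hθpos : 0 < θ := by positivity
  have hθle : θ ≤ a / 4 := by
    rw [hθdef]
    have := mul_le_mul_of_nonneg_left hple ha0.le
    linarith
  have hθδ' : |θ| < δ' := by
    rw [abs_of_pos hθpos]; linarith
  have hθδ : |θ| < δ := lt_of_lt_of_le hθδ' hδ'le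
  -- integrability of each exp(θ X i)
  have hint : ∀ i ∈ Finset.range n, Integrable (fun ω => Real.exp (θ * X i ω)) P := by
    intro i _
    have h := (hident i).comp (measurable_exp.comp (measurable_const_mul θ))
    exact h.integrable_iff.mpr (hmgf θ hθδ)
  -- S n as a sum of functions
  have hSfun : S n = ∑ i ∈ Finset.range n, X i := by
    funext ω; rw [hS]; simp [Finset.sum_apply]
  -- cgf of each X i equals ψ θ
  have hcgfX : ∀ i, cgf (X i) P θ = ψ θ := by
    intro i
    have h : mgf (X i) P θ = mgf (X 0) P θ := by
      unfold mgf
      exact ((hident i).comp (measurable_exp.comp (measurable_const_mul θ))).integral_eq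
    rw [cgf, h, hψdef θ hθδ]
    rfl
  have hcgfS : cgf (S n) P θ = (n:ℝ) * ψ θ := by
    rw [hSfun, hindep.cgf_sum hmeas hint]
    simp [hcgfX, Finset.sum_const]
  have hintS : Integrable (fun ω => Real.exp (θ * S n ω)) P := by
    rw [hSfun]; exact hindep.integrable_exp_mul_sum hmeas hint
  have hch := measure_ge_le_exp_cgf (X := S n) (μ := P)
    (a * (n:ℝ)^α + b * (n:ℝ)^(1-α)) hθpos.le hintS
  refine hch.trans ?_
  rw [← Real.exp_add]
  apply Real.exp_le_exp.mpr
  rw [hcgfS]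
  have hψθ : ψ θ ≤ θ ^ 2 := hψ θ hθδ'
  -- rpow algebra
  have A1 : (n:ℝ) ^ (α-1) * (n:ℝ) ^ α = (n:ℝ) ^ (2*α-1) := by
    rw [← Real.rpow_add hn0]; ring_nf
  have A2 : (n:ℝ) ^ (α-1) * (n:ℝ) ^ (1-α) = 1 := by
    rw [← Real.rpow_add hn0]
    norm_num
  have A3 : (n:ℝ) * ((n:ℝ) ^ (α-1)) ^ 2 = (n:ℝ) ^ (2*α-1) := by
    rw [sq, ← Real.rpow_add hn0]
    nth_rewrite 1 [← Real.rpow_one (n:ℝ)]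
    rw [← Real.rpow_add hn0]
    ring_nf
  have hnθ2 : (n:ℝ) * θ ^ 2 = a^2 / 16 * (n:ℝ) ^ (2*α-1) := by
    rw [hθdef]
    rw [show (n:ℝ) * (a * (n:ℝ)^(α-1) / 4)^2 = ((n:ℝ) * ((n:ℝ)^(α-1))^2) * a^2 / 16 by ring,
      A3]
    ring
  have hθB : θ * (a * (n:ℝ)^α + b * (n:ℝ)^(1-α)) =
      a^2 / 4 * (n:ℝ) ^ (2*α-1) + a * b / 4 := by
    rw [hθdef]
    rw [show a * (n:ℝ)^(α-1) / 4 * (a * (n:ℝ)^α + b * (n:ℝ)^(1-α)) =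
      a^2 / 4 * ((n:ℝ)^(α-1) * (n:ℝ)^α) + a * b / 4 * ((n:ℝ)^(α-1) * (n:ℝ)^(1-α)) by ring,
      A1, A2]
    ring
  have habs : -(a * b / 4) ≤ a * |b| / 4 := by
    have : -b ≤ |b| := neg_le_abs b
    have := mul_le_mul_of_nonneg_left this ha0.le
    linarith
  have hmono : (n:ℝ) * ψ θ ≤ a^2 / 16 * (n:ℝ) ^ (2*α-1) := by
    calc (n:ℝ) * ψ θ ≤ (n:ℝ) * θ^2 := by
          exact mul_le_mul_of_nonneg_left hψθ hn0.le
      _ = a^2 / 16 * (n:ℝ) ^ (2*α-1) := hnθ2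
  rw [neg_mul, hθB]
  have : -(a ^ 2 / 4 * (n:ℝ) ^ (2 * α - 1) + a * b / 4) + (n:ℝ) * ψ θ ≤
      -(a ^ 2 / 4 * (n:ℝ) ^ (2 * α - 1)) + a * |b| / 4 + a^2/16 * (n:ℝ)^(2*α-1) := by
    linarith
  refine this.trans ?_
  have := Real.rpow_pos_of_pos hn0 (2*α-1)
  nlinarith [Real.rpow_pos_of_pos hn0 (2*α-1)]

/-- `E[T₁^r ⋅ 1{T₁ < ∞}] < ∞` for every `r > 0`: the first record-breaking time,
restricted to the event that it is finite, has finite moments of every order. -/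
theorem first_record_time_finite_moments
    {Ω : Type*} [MeasurableSpace Ω] (P : Measure Ω) [IsProbabilityMeasure P]
    (X : ℕ → Ω → ℝ) (hmeas : ∀ i, Measurable (X i))
    (hindep : iIndepFun X P)
    (hident : ∀ i, IdentDistrib (X i) (X 0) P P)
    (hmean : ∫ ω, X 0 ω ∂P = 0)
    (δ : ℝ) (hδ : 0 < δ)
    (hmgf : ∀ θ : ℝ, |θ| < δ → Integrable (fun ω => exp (θ * X 0 ω)) P)
    (ψ : ℝ → ℝ) (hψdef : ∀ θ : ℝ, |θ| < δ → ψ θ = Real.log (∫ ω, exp (θ * X 0 ω) ∂P))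
    (δ' : ℝ) (hδ'pos : 0 < δ') (hδ'le : δ' ≤ δ)
    (hψ : ∀ θ : ℝ, |θ| < δ' → ψ θ ≤ θ ^ 2)
    (α a b : ℝ) (hα : 1/2 < α) (hα1 : α < 1)
    (ha0 : 0 < a) (ha : a < min (4 * δ') (1/2))
    (hb : b = (4 / a) *
      Real.log (4 * ∑' n : ℕ, (2:ℝ)^n * exp (-a^2 * (2:ℝ)^(2*(n:ℝ)*α - (n:ℝ) - 4))))
    (S : ℕ → Ω → ℝ) (hS : ∀ n ω, S n ω = ∑ i ∈ Finset.range n, X i ω)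
    (T₁ : Ω → ℕ∞)
    (hT₁ : ∀ ω, T₁ ω = sInf ((fun m : ℕ => (m : ℕ∞)) ''
      {m : ℕ | 1 ≤ m ∧ S m ω > a * (m:ℝ)^α + b * (m:ℝ)^(1-α)})) :
    ∀ r : ℝ, 0 < r →
      ∫⁻ ω, Set.indicator {ω' | T₁ ω' ≠ ⊤}
        (fun ω' => ENNReal.ofReal (((T₁ ω').toNat : ℝ) ^ r)) ω ∂P < ⊤ := by
  intro r hr
  have hSm : ∀ n, Measurable (S n) := by
    intro n
    have h : S n = fun ω => ∑ i ∈ Finset.range n, X i ω := funext (hS n)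
    rw [h]
    exact Finset.measurable_sum _ (fun i _ => hmeas i)
  set E : ℕ → Set Ω := fun n => {ω | a * (n:ℝ)^α + b * (n:ℝ)^(1-α) ≤ S n ω} with hE
  have hEm : ∀ n, MeasurableSet (E n) := fun n => measurableSet_le measurable_const (hSm n)
  set g : ℕ → Ω → ENNReal := fun n ω =>
    if 1 ≤ n then (E n).indicator (fun _ => ENNReal.ofReal ((n:ℝ)^r)) ω else 0 with hg
  -- pointwise bound
  have hpt : ∀ ω, Set.indicator {ω' | T₁ ω' ≠ ⊤}
      (fun ω' => ENNReal.ofReal (((T₁ ω').toNat : ℝ) ^ r)) ω ≤ ∑' n, g n ω := by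
    intro ω
    by_cases hω : T₁ ω = ⊤
    · rw [Set.indicator_of_notMem (by simp [hω])]
      exact zero_le
    · set A : Set ℕ := {m : ℕ | 1 ≤ m ∧ S m ω > a * (m:ℝ)^α + b * (m:ℝ)^(1-α)} with hA
      have hAne : A.Nonempty := by
        by_contra h
        rw [Set.not_nonempty_iff_eq_empty] at h
        apply hω
        rw [hT₁ ω, ← hA, h, Set.image_empty]
        exact sInf_empty
      have hmem : sInf A ∈ A := Nat.sInf_mem hAne
      have hT : T₁ ω = ((sInf A : ℕ) : ℕ∞) := by
        rw [hT₁ ω, ← hA]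
        apply le_antisymm
        · exact sInf_le ⟨sInf A, hmem, rfl⟩
        · apply le_sInf
          rintro x ⟨m, hm, rfl⟩
          show ((sInf A : ℕ) : ℕ∞) ≤ (m : ℕ∞)
          exact Nat.cast_le.mpr (Nat.sInf_le hm)
      have htoNat : (T₁ ω).toNat = sInf A := by rw [hT]; simp
      have h1 : Set.indicator {ω' | T₁ ω' ≠ ⊤}
          (fun ω' => ENNReal.ofReal (((T₁ ω').toNat : ℝ) ^ r)) ω
          = ENNReal.ofReal (((sInf A : ℕ) : ℝ) ^ r) := by
        rw [Set.indicator_of_mem (by simp [hω] : ω ∈ {ω' | T₁ ω' ≠ ⊤}), htoNat]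
      have h2 : g (sInf A) ω = ENNReal.ofReal (((sInf A : ℕ) : ℝ) ^ r) := by
        rw [hg]
        simp only [if_pos hmem.1]
        rw [Set.indicator_of_mem (show ω ∈ E (sInf A) from hmem.2.le)]
      rw [h1, ← h2]
      exact ENNReal.le_tsum (sInf A)
  have hmeasg : ∀ n, Measurable (g n) := by
    intro n
    by_cases h : 1 ≤ n
    · simp only [hg, if_pos h]
      exact measurable_const.indicator (hEm n)
    · simp only [hg, if_neg h]
      exact measurable_const
  calc ∫⁻ ω, Set.indicator {ω' | T₁ ω' ≠ ⊤}
        (fun ω' => ENNReal.ofReal (((T₁ ω').toNat : ℝ) ^ r)) ω ∂P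
      ≤ ∫⁻ ω, ∑' n, g n ω ∂P := lintegral_mono hpt
    _ = ∑' n, ∫⁻ ω, g n ω ∂P := lintegral_tsum (fun n => (hmeasg n).aemeasurable)
    _ ≤ ∑' n : ℕ, ENNReal.ofReal ((n:ℝ)^r *
          (Real.exp (a * |b| / 4) * Real.exp (-(3/16 * a^2) * (n:ℝ)^(2*α-1)))) := by
        apply ENNReal.tsum_le_tsum
        intro n
        by_cases h : 1 ≤ n
        · have hlint : ∫⁻ ω, g n ω ∂P = ENNReal.ofReal ((n:ℝ)^r) * P (E n) := by
            simp only [hg, if_pos h]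
            rw [lintegral_indicator_const (hEm n)]
          rw [hlint]
          have hPn : P (E n) ≤ ENNReal.ofReal
              (Real.exp (a * |b| / 4) * Real.exp (-(3/16 * a^2) * (n:ℝ)^(2*α-1))) := by
            have hch := chernoff_step P X hmeas hindep hident δ hδ hmgf ψ hψdef δ'
              hδ'pos hδ'le hψ α a b hα hα1 ha0 (lt_of_lt_of_le ha (min_le_left _ _)) S hS n h
            rw [← ENNReal.ofReal_toReal (measure_ne_top P (E n))]
            exact ENNReal.ofReal_le_ofReal hch
          calc ENNReal.ofReal ((n:ℝ)^r) * P (E n)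
              ≤ ENNReal.ofReal ((n:ℝ)^r) * ENNReal.ofReal
                (Real.exp (a * |b| / 4) * Real.exp (-(3/16 * a^2) * (n:ℝ)^(2*α-1))) :=
                mul_le_mul_right hPn _
            _ = ENNReal.ofReal ((n:ℝ)^r *
                (Real.exp (a * |b| / 4) * Real.exp (-(3/16 * a^2) * (n:ℝ)^(2*α-1)))) :=
                (ENNReal.ofReal_mul (Real.rpow_nonneg (Nat.cast_nonneg n) r)).symm
        · have : ∫⁻ ω, g n ω ∂P = 0 := by
            simp only [hg, if_neg h]
            simp
          rw [this]
          exact zero_le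
    _ < ⊤ := by
        have hsum : Summable (fun n : ℕ => (n:ℝ)^r *
            (Real.exp (a * |b| / 4) * Real.exp (-(3/16 * a^2) * (n:ℝ)^(2*α-1)))) := by
          have h1 := (summable_rpow_mul_exp_neg_rpow r (3/16 * a^2) (2*α-1)
            (by positivity) (by linarith)).mul_left (Real.exp (a * |b| / 4))
          exact h1.congr (fun n => by ring)
        rw [← ENNReal.ofReal_tsum_of_nonneg (fun n => by positivity) hsum]
        exact ENNReal.ofReal_lt_top
end

section
/- There exists γ > 0 such that E[exp(γ·(S_{T_1} − a·T_1^α − b·T_1^{1−α})) · 1{T_1 < ∞}] < ∞. In particular, conditional on T_1 < ∞, the overshoot R_{T_1} := S_{T_1} − a·T_1^α − b·T_1^{1−α} has finite moments of every order. -/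
open MeasureTheory ProbabilityTheory Real
open scoped ENNReal NNReal

lemma aux_summable_exp {d c : ℝ} (hd : 0 < d) (hc : 0 < c) :
    Summable (fun n : ℕ => Real.exp (-(d * (n : ℝ) ^ c))) := by
  set m : ℕ := ⌈2 / c⌉₊ with hm
  have hmc : 2 ≤ c * m := by
    have h1 : 2 / c ≤ (m : ℝ) := Nat.le_ceil _
    calc (2:ℝ) = c * (2 / c) := by field_simp
    _ ≤ c * m := by gcongr
  have key : ∀ n : ℕ, 1 ≤ n →
      Real.exp (-(d * (n : ℝ) ^ c)) ≤ ((m.factorial : ℝ) / d ^ m) * ((n : ℝ) ^ (2:ℕ))⁻¹ := by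
    intro n hn
    have hn1 : (1:ℝ) ≤ (n : ℝ) := by exact_mod_cast hn
    have hn0 : (0:ℝ) < (n : ℝ) := by linarith
    have hxpos : 0 < d * (n : ℝ) ^ c := mul_pos hd (Real.rpow_pos_of_pos hn0 c)
    have hexp : (d * (n:ℝ) ^ c) ^ m / (m.factorial : ℝ) ≤ Real.exp (d * (n:ℝ) ^ c) :=
      Real.pow_div_factorial_le_exp _ hxpos.le m
    have hpowpos : 0 < (d * (n:ℝ) ^ c) ^ m / (m.factorial : ℝ) := by positivity
    have hinv : Real.exp (-(d * (n:ℝ) ^ c)) ≤ ((d * (n:ℝ) ^ c) ^ m / (m.factorial : ℝ))⁻¹ := by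
      rw [Real.exp_neg]
      gcongr
    have hrw : ((d * (n:ℝ) ^ c) ^ m) = d ^ m * (n:ℝ) ^ (c * m) := by
      rw [mul_pow, ← Real.rpow_natCast ((n:ℝ) ^ c) m, ← Real.rpow_mul hn0.le]
    have hge : (n:ℝ) ^ ((2:ℕ):ℝ) ≤ (n:ℝ) ^ (c * m) :=
      Real.rpow_le_rpow_of_exponent_le hn1 (by exact_mod_cast hmc)
    rw [Real.rpow_natCast] at hge
    calc Real.exp (-(d * (n:ℝ) ^ c)) ≤ ((d * (n:ℝ) ^ c) ^ m / (m.factorial : ℝ))⁻¹ := hinv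
    _ = (m.factorial : ℝ) / (d ^ m * (n:ℝ) ^ (c * m)) := by rw [inv_div, hrw]
    _ ≤ (m.factorial : ℝ) / (d ^ m * (n:ℝ) ^ (2:ℕ)) := by
        apply div_le_div_of_nonneg_left (Nat.cast_nonneg _) (by positivity)
        gcongr
    _ = ((m.factorial : ℝ) / d ^ m) * ((n : ℝ) ^ (2:ℕ))⁻¹ := by
        rw [div_mul_eq_div_div]
        ring
  rw [← summable_nat_add_iff 1]
  apply Summable.of_nonneg_of_le (fun n => (Real.exp_pos _).le)
    (fun n => key (n + 1) (by omega))
  apply Summable.mul_left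
  have h2 : Summable (fun n : ℕ => ((n:ℝ) ^ (2:ℕ))⁻¹) := by
    have := Real.summable_one_div_nat_pow.mpr (le_refl 2)
    simp only [one_div] at this; exact this
  exact (summable_nat_add_iff (f := fun n : ℕ => ((n:ℝ) ^ (2:ℕ))⁻¹) 1).mpr h2

set_option maxHeartbeats 4000000 in
/-- There is `γ > 0` with `E[exp(γ R_{T₁}) 1{T₁ < ∞}] < ∞`, where
`R_{T₁} = S_{T₁} - a T₁^α - b T₁^{1-α}` is the overshoot; in particular the
overshoot restricted to `{T₁ < ∞}` has finite moments of every order. -/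
theorem overshoot_exponential_moment
    {Ω : Type*} [MeasurableSpace Ω] (P : Measure Ω) [IsProbabilityMeasure P]
    (X : ℕ → Ω → ℝ) (hmeas : ∀ i, Measurable (X i))
    (hindep : iIndepFun X P)
    (hident : ∀ i, IdentDistrib (X i) (X 0) P P)
    (hmean : ∫ ω, X 0 ω ∂P = 0)
    (δ : ℝ) (hδ : 0 < δ)
    (hmgf : ∀ θ : ℝ, |θ| < δ → Integrable (fun ω => exp (θ * X 0 ω)) P)
    (ψ : ℝ → ℝ) (hψdef : ∀ θ : ℝ, |θ| < δ → ψ θ = Real.log (∫ ω, exp (θ * X 0 ω) ∂P))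
    (δ' : ℝ) (hδ'pos : 0 < δ') (hδ'le : δ' ≤ δ)
    (hψ : ∀ θ : ℝ, |θ| < δ' → ψ θ ≤ θ ^ 2)
    (α a b : ℝ) (hα : 1/2 < α) (hα1 : α < 1)
    (ha0 : 0 < a) (ha : a < min (4 * δ') (1/2))
    (hb : b = (4 / a) *
      Real.log (4 * ∑' n : ℕ, (2:ℝ)^n * exp (-a^2 * (2:ℝ)^(2*(n:ℝ)*α - (n:ℝ) - 4))))
    (S : ℕ → Ω → ℝ) (hS : ∀ n ω, S n ω = ∑ i ∈ Finset.range n, X i ω)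
    (T₁ : Ω → ℕ∞)
    (hT₁ : ∀ ω, T₁ ω = sInf ((fun m : ℕ => (m : ℕ∞)) ''
      {m : ℕ | 1 ≤ m ∧ S m ω > a * (m:ℝ)^α + b * (m:ℝ)^(1-α)}))
    (R : Ω → ℝ)
    (hR : ∀ ω, R ω = S (T₁ ω).toNat ω - a * (((T₁ ω).toNat : ℝ))^α
      - b * (((T₁ ω).toNat : ℝ))^(1-α)) :
    (∃ γ : ℝ, 0 < γ ∧
      ∫⁻ ω, Set.indicator {ω' | T₁ ω' ≠ ⊤}
        (fun ω' => ENNReal.ofReal (exp (γ * R ω'))) ω ∂P < ⊤) ∧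
    ∀ r : ℝ, 0 < r →
      ∫⁻ ω, Set.indicator {ω' | T₁ ω' ≠ ⊤}
        (fun ω' => ENNReal.ofReal (R ω' ^ r)) ω ∂P < ⊤ := by
  obtain ⟨ha4, ha12⟩ := lt_min_iff.mp ha
  set γ : ℝ := δ / 4 with hγdef
  have hγ : 0 < γ := by positivity
  have hα0 : (0:ℝ) < α := by linarith
  have h1α : (0:ℝ) < 1 - α := by linarith
  -- b is nonnegative
  have hb0 : 0 ≤ b := by
    by_cases hsum : Summable (fun n : ℕ => (2:ℝ)^n * exp (-a^2 * (2:ℝ)^(2*(n:ℝ)*α - (n:ℝ) - 4)))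
    · rw [hb]
      apply mul_nonneg (by positivity)
      apply Real.log_nonneg
      have h0 : (2:ℝ)^(0:ℕ) * exp (-a^2 * (2:ℝ)^(2*((0:ℕ):ℝ)*α - ((0:ℕ):ℝ) - 4))
          ≤ ∑' n : ℕ, (2:ℝ)^n * exp (-a^2 * (2:ℝ)^(2*(n:ℝ)*α - (n:ℝ) - 4)) :=
        Summable.le_tsum hsum 0 (fun i _ => by positivity)
      have hterm : (1:ℝ)/4 ≤ (2:ℝ)^(0:ℕ) * exp (-a^2 * (2:ℝ)^(2*((0:ℕ):ℝ)*α - ((0:ℕ):ℝ) - 4)) := by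
        have he : 2*((0:ℕ):ℝ)*α - ((0:ℕ):ℝ) - 4 = -4 := by norm_num
        rw [he]
        have hple : (2:ℝ)^(-4:ℝ) ≤ 1 := by
          apply Real.rpow_le_one_of_one_le_of_nonpos (by norm_num) (by norm_num)
        have hppos : (0:ℝ) < (2:ℝ)^(-4:ℝ) := Real.rpow_pos_of_pos (by norm_num) _
        have ha2 : a^2 ≤ 1 := by nlinarith
        have hge : (-1:ℝ) ≤ -a^2 * (2:ℝ)^(-4:ℝ) := by nlinarith
        have := Real.exp_le_exp.mpr hge
        have h14 : (1:ℝ)/4 ≤ exp (-1) := by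
          rw [Real.exp_neg]
          rw [le_inv_comm₀ (by norm_num) (Real.exp_pos 1)]
          calc Real.exp 1 ≤ 2.7182818286 := Real.exp_one_lt_d9.le
          _ ≤ (1/4)⁻¹ := by norm_num
        calc (1:ℝ)/4 ≤ exp (-1) := h14
        _ ≤ exp (-a^2 * (2:ℝ)^(-4:ℝ)) := Real.exp_le_exp.mpr hge
        _ = (2:ℝ)^(0:ℕ) * exp (-a^2 * (2:ℝ)^(-4:ℝ)) := by norm_num
      have h0' : (1:ℝ)/4 ≤ ∑' n : ℕ, (2:ℝ)^n * exp (-a^2 * (2:ℝ)^(2*(n:ℝ)*α - (n:ℝ) - 4)) :=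
        le_trans hterm h0
      linarith
    · rw [hb, tsum_eq_zero_of_not_summable hsum]
      norm_num
  -- barrier
  set B : ℕ → ℝ := fun m => a * (m:ℝ) ^ α + b * (m:ℝ) ^ (1 - α) with hBdef
  have hBmono : ∀ p q : ℕ, p ≤ q → B p ≤ B q := by
    intro p q hpq
    have hpq' : ((p:ℝ)) ≤ (q:ℝ) := by exact_mod_cast hpq
    simp only [hBdef]
    have h1 : (p:ℝ) ^ α ≤ (q:ℝ) ^ α := Real.rpow_le_rpow (Nat.cast_nonneg p) hpq' hα0.le
    have h2 : (p:ℝ) ^ (1-α) ≤ (q:ℝ) ^ (1-α) := Real.rpow_le_rpow (Nat.cast_nonneg p) hpq' h1α.le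
    have := mul_le_mul_of_nonneg_left h1 ha0.le
    have := mul_le_mul_of_nonneg_left h2 hb0
    linarith
  -- characterization of T₁ = n
  have hchar : ∀ (ω : Ω) (n : ℕ), T₁ ω = (n : ℕ∞) ↔
      (1 ≤ n ∧ B n < S n ω ∧ ∀ m, 1 ≤ m → m < n → S m ω ≤ B m) := by
    intro ω n
    have hset : T₁ ω = sInf ((fun m : ℕ => (m : ℕ∞)) '' {m : ℕ | 1 ≤ m ∧ B m < S m ω}) := hT₁ ω
    constructor
    · intro h
      rw [h] at hset
      have hne : ((fun m : ℕ => (m : ℕ∞)) '' {m : ℕ | 1 ≤ m ∧ B m < S m ω}).Nonempty := by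
        by_contra hcon
        rw [Set.not_nonempty_iff_eq_empty] at hcon
        rw [hcon, _root_.sInf_empty] at hset
        exact (ENat.coe_ne_top n) hset
      have hmem := csInf_mem hne
      rw [← hset] at hmem
      obtain ⟨m, hmA, hmeq⟩ := hmem
      have hmeq' : (m : ℕ∞) = (n : ℕ∞) := hmeq
      have hmn : m = n := ENat.coe_inj.mp hmeq'
      subst hmn
      refine ⟨hmA.1, hmA.2, ?_⟩
      intro k hk1 hkn
      by_contra hcon
      push_neg at hcon
      have hkA : ((k:ℕ∞)) ∈ ((fun m : ℕ => (m : ℕ∞)) '' {m : ℕ | 1 ≤ m ∧ B m < S m ω}) :=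
        ⟨k, ⟨hk1, hcon⟩, rfl⟩
      have hle : (m:ℕ∞) ≤ (k:ℕ∞) := by rw [hset]; exact sInf_le hkA
      have : m ≤ k := by exact_mod_cast hle
      omega
    · rintro ⟨h1, h2, h3⟩
      rw [hset]
      apply le_antisymm
      · exact sInf_le ⟨n, ⟨h1, h2⟩, rfl⟩
      · apply le_sInf
        rintro x ⟨m, hm, rfl⟩
        have hnm : n ≤ m := by
          by_contra hcon
          push_neg at hcon
          exact absurd hm.2 (not_lt.mpr (h3 m hm.1 hcon))
        exact (ENat.coe_le_coe.mpr hnm : ((n:ℕ∞)) ≤ ((m:ℕ∞)))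
  -- measurability
  have hSmeas : ∀ n, Measurable (S n) := by
    intro n
    have h : S n = fun ω => ∑ i ∈ Finset.range n, X i ω := funext fun ω => hS n ω
    rw [h]
    exact Finset.measurable_sum _ fun i _ => hmeas i
  set E : ℕ → Set Ω := fun n => {ω | T₁ ω = (n : ℕ∞)} with hEdef
  have hEmeas : ∀ n, MeasurableSet (E n) := by
    intro n
    have hEeq : E n = {ω : Ω | 1 ≤ n} ∩ ({ω | B n < S n ω} ∩
        ⋂ (m : ℕ), ⋂ (_ : 1 ≤ m), ⋂ (_ : m < n), {ω | S m ω ≤ B m}) := by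
      ext ω
      simp only [hEdef, Set.mem_setOf_eq, Set.mem_inter_iff, Set.mem_iInter]
      rw [hchar ω n]
    rw [hEeq]
    refine (MeasurableSet.const _).inter ((measurableSet_lt measurable_const (hSmeas n)).inter ?_)
    exact MeasurableSet.iInter fun m => MeasurableSet.iInter fun _ =>
      MeasurableSet.iInter fun _ => measurableSet_le (hSmeas m) measurable_const
  have hdisj : Pairwise (Function.onFun Disjoint E) := by
    intro i j hij
    simp only [Function.onFun, Set.disjoint_left]
    intro ω hi hj
    apply hij
    have hi' : T₁ ω = (i : ℕ∞) := hi
    have hj' : T₁ ω = (j : ℕ∞) := hj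
    have : (i : ℕ∞) = (j : ℕ∞) := by rw [← hi', hj']
    exact_mod_cast this
  have hAeq : {ω' | T₁ ω' ≠ ⊤} = ⋃ n, E n := by
    ext ω
    simp only [Set.mem_setOf_eq, Set.mem_iUnion, hEdef]
    constructor
    · intro h
      cases hTn : T₁ ω with
      | top => exact absurd hTn h
      | coe n => exact ⟨n, rfl⟩
    · rintro ⟨n, hn⟩
      rw [hn]
      exact ENat.coe_ne_top n
  have hAmeas : MeasurableSet {ω' | T₁ ω' ≠ ⊤} := by
    rw [hAeq]; exact MeasurableSet.iUnion hEmeas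
  -- integrability facts
  have hexpmeas : ∀ (θ : ℝ) (i : ℕ), Measurable fun ω => exp (θ * X i ω) :=
    fun θ i => measurable_exp.comp ((hmeas i).const_mul θ)
  have hintX : ∀ (i : ℕ) (θ : ℝ), |θ| < δ → Integrable (fun ω => exp (θ * X i ω)) P := by
    intro i θ hθ
    have hid : IdentDistrib (fun ω => exp (θ * X i ω)) (fun ω => exp (θ * X 0 ω)) P P :=
      (hident i).comp (measurable_exp.comp (measurable_id.const_mul θ))
    exact hid.integrable_iff.mpr (hmgf θ hθ)
  have hmgfeq : ∀ (i : ℕ) (θ : ℝ), mgf (X i) P θ = mgf (X 0) P θ := by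
    intro i θ
    exact ((hident i).comp (measurable_exp.comp (measurable_id.const_mul θ))).integral_eq
  have hmgf_le : ∀ θ : ℝ, 0 ≤ θ → θ < δ' → mgf (X 0) P θ ≤ exp (θ ^ 2) := by
    intro θ h0 hθ'
    have habs : |θ| < δ' := by rwa [abs_of_nonneg h0]
    have habsδ : |θ| < δ := lt_of_lt_of_le habs hδ'le
    have hpos : 0 < mgf (X 0) P θ := mgf_pos (hmgf θ habsδ)
    have hlog : Real.log (mgf (X 0) P θ) ≤ θ ^ 2 := by
      have h1 := hψ θ habs
      rwa [hψdef θ habsδ] at h1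
    calc mgf (X 0) P θ = exp (Real.log (mgf (X 0) P θ)) := (Real.exp_log hpos).symm
    _ ≤ exp (θ ^ 2) := Real.exp_le_exp.mpr hlog
  -- Chernoff bound
  obtain ⟨κ, hκdef⟩ : ∃ κ : ℝ, κ = 3 * a ^ 2 / 16 := ⟨_, rfl⟩
  have hκ : 0 < κ := by rw [hκdef]; positivity
  have hP : ∀ n : ℕ, 1 ≤ n → P (E n) ≤ ENNReal.ofReal (exp (-(κ * (n:ℝ) ^ (2 * α - 1)))) := by
    intro n hn
    have hn0 : (0:ℝ) < (n:ℝ) := by exact_mod_cast hn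
    obtain ⟨θ, hθdef⟩ : ∃ θ : ℝ, θ = a / 4 * (n:ℝ) ^ (α - 1) := ⟨_, rfl⟩
    have hθpos : 0 < θ := by rw [hθdef]; positivity
    have hvle : (n:ℝ) ^ (α - 1) ≤ 1 :=
      Real.rpow_le_one_of_one_le_of_nonpos (by exact_mod_cast hn) (by linarith)
    have hθle : θ ≤ a / 4 := by
      calc θ = a/4 * (n:ℝ)^(α-1) := hθdef
      _ ≤ a/4 * 1 := by gcongr
      _ = a/4 := mul_one _
    have hθδ' : θ < δ' := lt_of_le_of_lt hθle (by linarith)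
    have hθδ : |θ| < δ := by rw [abs_of_pos hθpos]; linarith
    have hSn : S n = ∑ i ∈ Finset.range n, X i := by
      funext ω
      rw [hS n ω]
      simp [Finset.sum_apply]
    have hint : Integrable (fun ω => exp (θ * S n ω)) P := by
      rw [hSn]
      exact hindep.integrable_exp_mul_sum hmeas fun i _ => hintX i θ hθδ
    have hcher := measure_ge_le_exp_mul_mgf (X := S n) (μ := P) (B n) hθpos.le hint
    have hmgfS : mgf (S n) P θ ≤ exp ((n:ℝ) * θ ^ 2) := by
      rw [hSn, hindep.mgf_sum hmeas]
      have hcg : ∀ i ∈ Finset.range n, mgf (X i) P θ = mgf (X 0) P θ := fun i _ => hmgfeq i θ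
      rw [Finset.prod_congr rfl hcg, Finset.prod_const, Finset.card_range]
      calc (mgf (X 0) P θ) ^ n ≤ (exp (θ^2)) ^ n :=
        pow_le_pow_left₀ mgf_nonneg (hmgf_le θ hθpos.le hθδ') n
      _ = exp ((n:ℝ) * θ^2) := (Real.exp_nat_mul _ n).symm
    have hEB : E n ⊆ {ω | B n ≤ S n ω} := by
      intro ω hω
      have hω' : T₁ ω = (n:ℕ∞) := hω
      exact (((hchar ω n).mp hω').2.1).le
    -- arithmetic
    have e1 : (n:ℝ)^(α-1) * (n:ℝ)^α = (n:ℝ)^(2*α-1) := by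
      rw [← Real.rpow_add hn0]
      ring_nf
    have e2 : (n:ℝ) * ((n:ℝ)^(α-1) * (n:ℝ)^(α-1)) = (n:ℝ)^(2*α-1) := by
      rw [← Real.rpow_add hn0]
      nth_rewrite 1 [show (n:ℝ) = (n:ℝ)^(1:ℝ) from (Real.rpow_one _).symm]
      rw [← Real.rpow_add hn0]
      ring_nf
    have hBge : a * (n:ℝ)^α ≤ B n := by
      simp only [hBdef]
      have := Real.rpow_nonneg (Nat.cast_nonneg n) (1-α)
      nlinarith
    have hθB : a^2/4 * (n:ℝ)^(2*α-1) ≤ θ * B n := by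
      have h1 : θ * (a * (n:ℝ)^α) = a^2/4 * (n:ℝ)^(2*α-1) := by
        rw [hθdef, ← e1]
        ring
      have h2 := mul_le_mul_of_nonneg_left hBge hθpos.le
      exact le_of_eq_of_le h1.symm h2
    have hnθ : (n:ℝ) * θ^2 = a^2/16 * (n:ℝ)^(2*α-1) := by
      rw [hθdef, ← e2]
      ring
    have h5 : -θ * B n + (n:ℝ)*θ^2 ≤ -(κ * (n:ℝ)^(2*α-1)) := by
      rw [hκdef]
      linarith [hθB, hnθ]
    have htoReal : (P (E n)).toReal ≤ exp (-(κ * (n:ℝ) ^ (2*α-1))) := by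
      calc (P (E n)).toReal ≤ (P {ω | B n ≤ S n ω}).toReal :=
        ENNReal.toReal_mono (measure_ne_top _ _) (measure_mono hEB)
      _ ≤ exp (-θ * B n) * mgf (S n) P θ := hcher
      _ ≤ exp (-θ * B n) * exp ((n:ℝ)*θ^2) :=
          mul_le_mul_of_nonneg_left hmgfS (Real.exp_pos _).le
      _ = exp (-θ * B n + (n:ℝ)*θ^2) := (Real.exp_add _ _).symm
      _ ≤ exp (-(κ * (n:ℝ)^(2*α-1))) := Real.exp_le_exp.mpr h5
    calc P (E n) = ENNReal.ofReal ((P (E n)).toReal) :=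
      (ENNReal.ofReal_toReal (measure_ne_top _ _)).symm
    _ ≤ ENNReal.ofReal (exp (-(κ * (n:ℝ)^(2*α-1)))) := ENNReal.ofReal_le_ofReal htoReal
  -- Cauchy-Schwarz constant
  have h2γ : |2 * γ| < δ := by
    rw [abs_of_pos (by positivity)]
    rw [hγdef]
    linarith
  obtain ⟨M, hMdef⟩ : ∃ M : ℝ, M = mgf (X 0) P (2 * γ) := ⟨_, rfl⟩
  obtain ⟨CM, hCMdef⟩ : ∃ CM : ℝ≥0∞, CM = (ENNReal.ofReal M) ^ ((1:ℝ)/2) := ⟨_, rfl⟩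
  have hCMne : CM ≠ ⊤ := by
    rw [hCMdef]
    exact ENNReal.rpow_ne_top_of_nonneg (by norm_num) ENNReal.ofReal_ne_top
  -- R positive on the event
  have hRpos : ∀ ω, T₁ ω ≠ ⊤ → 0 < R ω := by
    intro ω h
    have hω : ω ∈ ⋃ n, E n := by rw [← hAeq]; exact h
    rw [Set.mem_iUnion] at hω
    obtain ⟨n, hn⟩ := hω
    have hn' : T₁ ω = (n:ℕ∞) := hn
    obtain ⟨h1, h2, _⟩ := (hchar ω n).mp hn'
    have htn : (T₁ ω).toNat = n := by rw [hn']; exact ENat.toNat_coe n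
    have hRω : R ω = S n ω - B n := by
      rw [hR ω, htn]
      simp only [hBdef]
      ring
    rw [hRω]
    linarith
  -- the term bound
  have hterm : ∀ n : ℕ, ∫⁻ ω in E n, ENNReal.ofReal (exp (γ * R ω)) ∂P
      ≤ CM * ENNReal.ofReal (exp (-(κ/2 * (n:ℝ) ^ (2*α-1)))) := by
    intro n
    rcases Nat.eq_zero_or_pos n with rfl | hn
    · have hE0 : E 0 = ∅ := by
        ext ω
        simp only [hEdef, Set.mem_setOf_eq, Set.mem_empty_iff_false, iff_false]
        intro h
        exact absurd ((hchar ω 0).mp h).1 (by omega)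
      rw [hE0]
      simp
    · have hRle : ∀ ω ∈ E n,
          ENNReal.ofReal (exp (γ * R ω)) ≤ ENNReal.ofReal (exp (γ * X (n-1) ω)) := by
        intro ω hω
        have hω' : T₁ ω = (n:ℕ∞) := hω
        obtain ⟨h1, h2, h3⟩ := (hchar ω n).mp hω'
        have htn : (T₁ ω).toNat = n := by rw [hω']; exact ENat.toNat_coe n
        have hRω : R ω = S n ω - B n := by
          rw [hR ω, htn]
          simp only [hBdef]
          ring
        have hprev : S (n-1) ω ≤ B (n-1) := by
          rcases Nat.lt_or_ge n 2 with h | h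
          · have hn1 : n = 1 := by omega
            subst hn1
            have hS0 : S 0 ω = 0 := by rw [hS 0 ω]; simp
            have hB0 : B 0 = 0 := by
              simp only [hBdef]
              rw [Nat.cast_zero, Real.zero_rpow (by linarith : α ≠ 0),
                Real.zero_rpow (by linarith : 1 - α ≠ 0)]
              ring
            simp [hS0, hB0]
          · exact h3 (n-1) (by omega) (by omega)
        have hsplit : S n ω = S (n-1) ω + X (n-1) ω := by
          rw [hS n ω, hS (n-1) ω]
          have hn1 : n = (n-1) + 1 := by omega
          nth_rewrite 1 [hn1]
          rw [Finset.sum_range_succ]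
        have hXle : R ω ≤ X (n-1) ω := by
          have := hBmono (n-1) n (by omega)
          rw [hRω, hsplit]
          linarith
        exact ENNReal.ofReal_le_ofReal
          (Real.exp_le_exp.mpr (mul_le_mul_of_nonneg_left hXle hγ.le))
      have step1 : ∫⁻ ω in E n, ENNReal.ofReal (exp (γ * R ω)) ∂P
          ≤ ∫⁻ ω in E n, ENNReal.ofReal (exp (γ * X (n-1) ω)) ∂P :=
        setLIntegral_mono (ENNReal.measurable_ofReal.comp (hexpmeas γ (n-1))) hRle
      have hfmeas : Measurable fun ω => ENNReal.ofReal (exp (2*γ * X (n-1) ω)) :=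
        ENNReal.measurable_ofReal.comp (hexpmeas (2*γ) (n-1))
      have hgmeas : Measurable ((E n).indicator (1 : Ω → ℝ≥0∞)) :=
        measurable_one.indicator (hEmeas n)
      have hCS := ENNReal.lintegral_mul_norm_pow_le (μ := P)
        hfmeas.aemeasurable hgmeas.aemeasurable
        (by norm_num : (0:ℝ) ≤ 1/2) (by norm_num : (0:ℝ) ≤ 1/2) (by norm_num : (1:ℝ)/2 + 1/2 = 1)
      have hLHS : (∫⁻ ω, (ENNReal.ofReal (exp (2*γ * X (n-1) ω))) ^ ((1:ℝ)/2)
            * ((E n).indicator (1 : Ω → ℝ≥0∞) ω) ^ ((1:ℝ)/2) ∂P)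
          = ∫⁻ ω in E n, ENNReal.ofReal (exp (γ * X (n-1) ω)) ∂P := by
        rw [← lintegral_indicator (hEmeas n)]
        congr 1
        funext ω
        by_cases hω : ω ∈ E n
        · rw [Set.indicator_of_mem hω, Set.indicator_of_mem hω]
          simp only [Pi.one_apply, ENNReal.one_rpow, mul_one]
          rw [ENNReal.ofReal_rpow_of_pos (Real.exp_pos _)]
          congr 1
          rw [Real.rpow_def_of_pos (Real.exp_pos _), Real.log_exp]
          congr 1
          ring
        · rw [Set.indicator_of_notMem hω, Set.indicator_of_notMem hω]
          rw [ENNReal.zero_rpow_of_pos (by norm_num)]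
          rw [mul_zero]
      have hf_int : ∫⁻ ω, ENNReal.ofReal (exp (2*γ * X (n-1) ω)) ∂P = ENNReal.ofReal M := by
        rw [← MeasureTheory.ofReal_integral_eq_lintegral_ofReal (hintX (n-1) (2*γ) h2γ)
          (Filter.Eventually.of_forall fun ω => (Real.exp_pos _).le)]
        congr 1
        have hmm : ∫ ω, exp (2*γ * X (n-1) ω) ∂P = mgf (X (n-1)) P (2*γ) := rfl
        rw [hmm, hmgfeq, hMdef]
      have hg_int : ∫⁻ ω, (E n).indicator (1 : Ω → ℝ≥0∞) ω ∂P = P (E n) :=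
        lintegral_indicator_one (hEmeas n)
      rw [hLHS, hf_int, hg_int] at hCS
      have hfinal : (P (E n)) ^ ((1:ℝ)/2)
          ≤ ENNReal.ofReal (exp (-(κ/2 * (n:ℝ)^(2*α-1)))) := by
        calc (P (E n)) ^ ((1:ℝ)/2)
            ≤ (ENNReal.ofReal (exp (-(κ * (n:ℝ)^(2*α-1))))) ^ ((1:ℝ)/2) :=
          ENNReal.rpow_le_rpow (hP n hn) (by norm_num)
        _ = ENNReal.ofReal ((exp (-(κ * (n:ℝ)^(2*α-1)))) ^ ((1:ℝ)/2)) :=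
          ENNReal.ofReal_rpow_of_pos (Real.exp_pos _)
        _ = ENNReal.ofReal (exp (-(κ/2 * (n:ℝ)^(2*α-1)))) := by
            congr 1
            rw [Real.rpow_def_of_pos (Real.exp_pos _), Real.log_exp]
            congr 1
            ring
      calc ∫⁻ ω in E n, ENNReal.ofReal (exp (γ * R ω)) ∂P
          ≤ ∫⁻ ω in E n, ENNReal.ofReal (exp (γ * X (n-1) ω)) ∂P := step1
      _ ≤ (ENNReal.ofReal M) ^ ((1:ℝ)/2) * (P (E n)) ^ ((1:ℝ)/2) := hCS
      _ ≤ CM * ENNReal.ofReal (exp (-(κ/2 * (n:ℝ)^(2*α-1)))) := by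
          rw [hCMdef]
          exact mul_le_mul_right hfinal _
  -- main exponential bound
  have key : ∫⁻ ω, Set.indicator {ω' | T₁ ω' ≠ ⊤}
      (fun ω' => ENNReal.ofReal (exp (γ * R ω'))) ω ∂P < ⊤ := by
    rw [hAeq, lintegral_indicator (MeasurableSet.iUnion hEmeas),
      lintegral_iUnion hEmeas hdisj]
    calc ∑' n, ∫⁻ ω in E n, ENNReal.ofReal (exp (γ * R ω)) ∂P
        ≤ ∑' n : ℕ, CM * ENNReal.ofReal (exp (-(κ/2 * (n:ℝ) ^ (2*α-1)))) :=
      ENNReal.tsum_le_tsum hterm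
    _ = CM * ∑' n : ℕ, ENNReal.ofReal (exp (-(κ/2 * (n:ℝ) ^ (2*α-1)))) := ENNReal.tsum_mul_left
    _ = CM * ENNReal.ofReal (∑' n : ℕ, exp (-(κ/2 * (n:ℝ) ^ (2*α-1)))) := by
        rw [ENNReal.ofReal_tsum_of_nonneg (fun n => (Real.exp_pos _).le)
          (aux_summable_exp (by positivity) (by linarith))]
    _ < ⊤ := ENNReal.mul_lt_top (lt_top_iff_ne_top.mpr hCMne) ENNReal.ofReal_lt_top
  refine ⟨⟨γ, hγ, key⟩, ?_⟩
  -- moments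
  intro r hr
  obtain ⟨k, hkdef⟩ : ∃ k : ℕ, k = ⌈r⌉₊ := ⟨_, rfl⟩
  obtain ⟨c2, hc2⟩ : ∃ c2 : ℝ, c2 = (k.factorial : ℝ) / γ ^ k := ⟨_, rfl⟩
  have hγk : (0:ℝ) < γ ^ k := by positivity
  have hc2nonneg : 0 ≤ c2 := by rw [hc2]; positivity
  have hpoint : (fun ω => Set.indicator {ω' | T₁ ω' ≠ ⊤}
        (fun ω' => ENNReal.ofReal (R ω' ^ r)) ω)
      ≤ fun ω => Set.indicator {ω' | T₁ ω' ≠ ⊤} (fun _ => (1:ℝ≥0∞)) ω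
        + ENNReal.ofReal c2 * Set.indicator {ω' | T₁ ω' ≠ ⊤}
            (fun ω' => ENNReal.ofReal (exp (γ * R ω'))) ω := by
    intro ω
    dsimp only
    by_cases hω : ω ∈ {ω' | T₁ ω' ≠ ⊤}
    · rw [Set.indicator_of_mem hω, Set.indicator_of_mem hω, Set.indicator_of_mem hω]
      have hR0 : 0 < R ω := hRpos ω hω
      have h1 : R ω ^ r ≤ 1 + R ω ^ k := by
        rcases le_or_gt 1 (R ω) with h | h
        · have h2 : R ω ^ r ≤ R ω ^ ((k:ℕ):ℝ) :=
            Real.rpow_le_rpow_of_exponent_le h (hkdef ▸ Nat.le_ceil r)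
          rw [Real.rpow_natCast] at h2
          linarith
        · have h2 : R ω ^ r ≤ 1 := Real.rpow_le_one hR0.le h.le hr.le
          have h3 : 0 ≤ R ω ^ k := pow_nonneg hR0.le k
          linarith
      have h2 : R ω ^ k ≤ c2 * exp (γ * R ω) := by
        have h3 := Real.pow_div_factorial_le_exp _ (mul_nonneg hγ.le hR0.le) k
        rw [mul_pow, div_le_iff₀ (by positivity : (0:ℝ) < (k.factorial:ℝ))] at h3
        have hc2e : c2 * exp (γ * R ω) = (k.factorial : ℝ) * exp (γ * R ω) / γ ^ k := by
          rw [hc2]; ring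
        rw [hc2e, le_div_iff₀ hγk]
        nlinarith
      have hRr0 : 0 ≤ R ω ^ r := Real.rpow_nonneg hR0.le r
      calc ENNReal.ofReal (R ω ^ r) ≤ ENNReal.ofReal (1 + c2 * exp (γ * R ω)) :=
        ENNReal.ofReal_le_ofReal (by linarith)
      _ = 1 + ENNReal.ofReal c2 * ENNReal.ofReal (exp (γ * R ω)) := by
          rw [ENNReal.ofReal_add (by norm_num) (by positivity), ENNReal.ofReal_one,
            ENNReal.ofReal_mul hc2nonneg]
    · rw [Set.indicator_of_notMem hω, Set.indicator_of_notMem hω,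
        Set.indicator_of_notMem hω]
      simp
  calc ∫⁻ ω, Set.indicator {ω' | T₁ ω' ≠ ⊤} (fun ω' => ENNReal.ofReal (R ω' ^ r)) ω ∂P
      ≤ ∫⁻ ω, (Set.indicator {ω' | T₁ ω' ≠ ⊤} (fun _ => (1:ℝ≥0∞)) ω
        + ENNReal.ofReal c2 * Set.indicator {ω' | T₁ ω' ≠ ⊤}
            (fun ω' => ENNReal.ofReal (exp (γ * R ω'))) ω) ∂P := lintegral_mono hpoint
  _ = (∫⁻ ω, Set.indicator {ω' | T₁ ω' ≠ ⊤} (fun _ => (1:ℝ≥0∞)) ω ∂P)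
      + ∫⁻ ω, ENNReal.ofReal c2 * Set.indicator {ω' | T₁ ω' ≠ ⊤}
          (fun ω' => ENNReal.ofReal (exp (γ * R ω'))) ω ∂P :=
    lintegral_add_left (measurable_const.indicator hAmeas) _
  _ = (∫⁻ ω, Set.indicator {ω' | T₁ ω' ≠ ⊤} (fun _ => (1:ℝ≥0∞)) ω ∂P)
      + ENNReal.ofReal c2 * ∫⁻ ω, Set.indicator {ω' | T₁ ω' ≠ ⊤}
          (fun ω' => ENNReal.ofReal (exp (γ * R ω'))) ω ∂P := by
    rw [lintegral_const_mul' _ _ ENNReal.ofReal_ne_top]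
  _ < ⊤ := by
    apply ENNReal.add_lt_top.mpr
    constructor
    · calc ∫⁻ ω, Set.indicator {ω' | T₁ ω' ≠ ⊤} (fun _ => (1:ℝ≥0∞)) ω ∂P
          = P {ω' | T₁ ω' ≠ ⊤} := lintegral_indicator_one hAmeas
      _ < ⊤ := measure_lt_top _ _
    · exact ENNReal.mul_lt_top ENNReal.ofReal_lt_top key
end

section
/- For every r ≥ 1, E[Γ(κ)^r] < ∞, where Γ(κ) := ⌈(2·S_{T_{κ−1}} + 2ξ)^{1/α}⌉; i.e., the horizon Γ(κ) has finite moments of every order. -/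
open MeasureTheory ProbabilityTheory Real
open scoped ENNReal NNReal

private lemma aux_rpow_subadd {x y p : ℝ} (hx : 0 ≤ x) (hy : 0 ≤ y) (hp : 0 ≤ p) (hp1 : p ≤ 1) :
    (x + y) ^ p ≤ x ^ p + y ^ p := by
  have h := NNReal.rpow_add_le_add_rpow x.toNNReal y.toNNReal hp hp1
  have := NNReal.coe_le_coe.2 h
  push_cast [NNReal.coe_rpow] at this
  rwa [Real.coe_toNNReal x hx, Real.coe_toNNReal y hy] at this

private lemma aux_summable_rpow_mul_exp {c β s : ℝ} (hc : 0 < c) (hβ : 0 < β) :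
    ∑' n : ℕ, ENNReal.ofReal ((n:ℝ) ^ s * Real.exp (-(c * (n:ℝ) ^ β))) < ⊤ := by
  set t : ℕ → ℝ := fun n => (n:ℝ) ^ s * Real.exp (-(c * (n:ℝ) ^ β)) with ht
  have htnn : ∀ n, 0 ≤ t n := fun n =>
    mul_nonneg (Real.rpow_nonneg (Nat.cast_nonneg n) s) (Real.exp_nonneg _)
  obtain ⟨k, hk⟩ : ∃ k : ℕ, s + 2 ≤ β * k := by
    refine ⟨⌈(s+2)/β⌉₊, ?_⟩
    have h1 : (s+2)/β ≤ (⌈(s+2)/β⌉₊ : ℝ) := Nat.le_ceil _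
    calc s + 2 = ((s+2)/β) * β := by field_simp
    _ ≤ (⌈(s+2)/β⌉₊ : ℝ) * β := by gcongr
    _ = β * ⌈(s+2)/β⌉₊ := mul_comm _ _
  set K : ℝ := (Nat.factorial k : ℝ) / c ^ k with hK
  have hbound : ∀ n : ℕ, 1 ≤ n → t n ≤ K * (n:ℝ) ^ (-2:ℝ) := by
    intro n hn
    have hn0 : (0:ℝ) < (n:ℝ) := by exact_mod_cast hn
    have hn1 : (1:ℝ) ≤ (n:ℝ) := by exact_mod_cast hn
    have hexp : c ^ k * (n:ℝ) ^ (s + 2) / (Nat.factorial k : ℝ) ≤ Real.exp (c * (n:ℝ) ^ β) := by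
      have h1 : (c * (n:ℝ) ^ β) ^ k / (Nat.factorial k : ℝ) ≤ Real.exp (c * (n:ℝ) ^ β) :=
        Real.pow_div_factorial_le_exp _ (mul_nonneg hc.le (Real.rpow_nonneg hn0.le β)) k
      have h2 : (n:ℝ) ^ (s+2) ≤ ((n:ℝ) ^ β) ^ k := by
        rw [← Real.rpow_natCast ((n:ℝ) ^ β) k, ← Real.rpow_mul hn0.le]
        exact Real.rpow_le_rpow_of_exponent_le hn1 hk
      calc c ^ k * (n:ℝ) ^ (s+2) / (Nat.factorial k : ℝ)
          ≤ c ^ k * ((n:ℝ) ^ β) ^ k / (Nat.factorial k : ℝ) := by gcongr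
      _ = (c * (n:ℝ) ^ β) ^ k / (Nat.factorial k : ℝ) := by rw [mul_pow]
      _ ≤ Real.exp (c * (n:ℝ) ^ β) := h1
    have hfac : (0:ℝ) < (Nat.factorial k : ℝ) := by exact_mod_cast Nat.factorial_pos k
    have hck : (0:ℝ) < c ^ k := pow_pos hc k
    have hns2 : (0:ℝ) < (n:ℝ) ^ (s+2) := Real.rpow_pos_of_pos hn0 _
    have hApos : (0:ℝ) < c ^ k * (n:ℝ) ^ (s + 2) / (Nat.factorial k : ℝ) := by positivity
    have hexp' : Real.exp (-(c * (n:ℝ) ^ β)) ≤ (Nat.factorial k : ℝ) / (c ^ k * (n:ℝ) ^ (s+2)) := by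
      rw [Real.exp_neg]
      calc (Real.exp (c * (n:ℝ) ^ β))⁻¹
          ≤ (c ^ k * (n:ℝ) ^ (s + 2) / (Nat.factorial k : ℝ))⁻¹ := inv_anti₀ hApos hexp
      _ = (Nat.factorial k : ℝ) / (c ^ k * (n:ℝ) ^ (s+2)) := by rw [inv_div]
    have hsplit : (n:ℝ) ^ (-2:ℝ) = (n:ℝ) ^ s / (n:ℝ) ^ (s+2) := by
      rw [← Real.rpow_sub hn0]; norm_num
    calc t n ≤ (n:ℝ) ^ s * ((Nat.factorial k : ℝ) / (c ^ k * (n:ℝ) ^ (s+2))) :=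
          mul_le_mul_of_nonneg_left hexp' (Real.rpow_nonneg hn0.le s)
    _ = K * (n:ℝ) ^ (-2:ℝ) := by rw [hsplit, hK]; field_simp
  have hsum : Summable t := by
    rw [← summable_nat_add_iff 1]
    apply Summable.of_nonneg_of_le (fun n => htnn _) (fun n => hbound (n+1) (by omega))
    exact (summable_nat_add_iff 1).mpr ((Real.summable_nat_rpow.mpr (by norm_num)).mul_left K)
  rw [← ENNReal.ofReal_tsum_of_nonneg htnn hsum]
  exact ENNReal.ofReal_lt_top

set_option maxHeartbeats 2000000

/-- The horizon `Γ(κ) = ⌈(2 S_{T_{κ-1}} + 2ξ)^{1/α}⌉` has finite moments of every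
order `r ≥ 1`. -/
theorem Gamma_kappa_finite_moments
    {Ω : Type*} [MeasurableSpace Ω] (P : Measure Ω) [IsProbabilityMeasure P]
    (X : ℕ → Ω → ℝ) (hmeas : ∀ i, Measurable (X i))
    (hindep : iIndepFun X P)
    (hident : ∀ i, IdentDistrib (X i) (X 0) P P)
    (hmean : ∫ ω, X 0 ω ∂P = 0)
    (δ : ℝ) (hδ : 0 < δ)
    (hmgf : ∀ θ : ℝ, |θ| < δ → Integrable (fun ω => exp (θ * X 0 ω)) P)
    (ψ : ℝ → ℝ) (hψdef : ∀ θ : ℝ, |θ| < δ → ψ θ = Real.log (∫ ω, exp (θ * X 0 ω) ∂P))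
    (δ' : ℝ) (hδ'pos : 0 < δ') (hδ'le : δ' ≤ δ)
    (hψ : ∀ θ : ℝ, |θ| < δ' → ψ θ ≤ θ ^ 2)
    (α a b : ℝ) (hα : 1/2 < α) (hα1 : α < 1)
    (ha0 : 0 < a) (ha : a < min (4 * δ') (1/2))
    (hb : b = (4 / a) *
      Real.log (4 * ∑' n : ℕ, (2:ℝ)^n * exp (-a^2 * (2:ℝ)^(2*(n:ℝ)*α - (n:ℝ) - 4))))
    (S : ℕ → Ω → ℝ) (hS : ∀ n ω, S n ω = ∑ i ∈ Finset.range n, X i ω)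
    (T : ℕ → Ω → ℕ∞)
    (hT0 : ∀ ω, T 0 ω = 0)
    (hTtop : ∀ k ω, T k ω = ⊤ → T (k+1) ω = ⊤)
    (hTrec : ∀ k ω (t : ℕ), T k ω = (t : ℕ∞) →
      T (k+1) ω = sInf ((fun m : ℕ => (m : ℕ∞)) ''
        {m : ℕ | t < m ∧ S m ω > S t ω + a * ((m:ℝ) - (t:ℝ))^α
            + b * ((m:ℝ) - (t:ℝ))^(1-α)}))
    (κ : Ω → ℕ) (hκ : ∀ ω, κ ω = sInf {k : ℕ | 0 < k ∧ T k ω = ⊤})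
    (ξ : ℝ)
    (hξ : ξ = ⨆ n : ℕ, (a * (n:ℝ)^α + b * (n:ℝ)^(1-α) - (1/2) * (n:ℝ)^α))
    (Γ : Ω → ℕ)
    (hΓ : ∀ ω, Γ ω = ⌈(2 * S (T (κ ω - 1) ω).toNat ω + 2 * ξ) ^ (1/α)⌉₊) :
    ∀ r : ℝ, 1 ≤ r → ∫⁻ ω, ENNReal.ofReal ((Γ ω : ℝ) ^ r) ∂P < ⊤ := by
  intro r hr
  have hα0 : (0:ℝ) < α := by linarith
  have h1α : (0:ℝ) < 1 - α := by linarith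
  have h2α : (0:ℝ) < 2*α - 1 := by linarith
  have ha4 : a < 4 * δ' := lt_of_lt_of_le ha (min_le_left _ _)
  have ha12 : a < 1/2 := lt_of_lt_of_le ha (min_le_right _ _)
  have haδ' : a/4 < δ' := by linarith
  -- b is nonnegative
  have hb0 : (0:ℝ) ≤ b := by
    rw [hb]
    apply mul_nonneg (by positivity)
    set f : ℕ → ℝ := fun n => (2:ℝ)^n * exp (-a^2 * (2:ℝ)^(2*(n:ℝ)*α - (n:ℝ) - 4)) with hf
    have hfnn : ∀ n, 0 ≤ f n := fun n => by positivity
    by_cases hsum : Summable f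
    · apply Real.log_nonneg
      have h0 : f 0 ≤ ∑' n, f n := by
        have := Summable.sum_le_tsum {0} (fun i _ => hfnn i) hsum
        simpa using this
      have h2 : (2:ℝ) ^ (-4:ℝ) = 1/16 := by
        rw [show (-4:ℝ) = ((-4:ℤ):ℝ) by norm_num, Real.rpow_intCast]
        norm_num
      have hf0 : exp (-(1:ℝ)/16) ≤ f 0 := by
        simp only [hf, pow_zero, one_mul, Nat.cast_zero, mul_zero, zero_sub, zero_mul]
        apply Real.exp_le_exp.mpr
        rw [show -(0:ℝ) - 4 = -4 by ring, h2]
        have ha2 : a^2 ≤ 1 := by nlinarith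
        nlinarith
      have hexp : (1:ℝ)/4 ≤ exp (-(1:ℝ)/16) := by
        have h4 : exp ((1:ℝ)/16) ≤ 4 := by
          calc exp ((1:ℝ)/16) ≤ exp 1 := Real.exp_le_exp.mpr (by norm_num)
          _ ≤ 4 := by have := Real.exp_one_lt_d9; linarith
        rw [show -(1:ℝ)/16 = -(1/16) by ring, Real.exp_neg]
        calc (1:ℝ)/4 = 4⁻¹ := by norm_num
        _ ≤ (exp ((1:ℝ)/16))⁻¹ := inv_anti₀ (Real.exp_pos _) h4
      nlinarith [h0, hf0, hexp]
    · rw [tsum_eq_zero_of_not_summable hsum]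
      simp
  -- ξ is nonnegative
  have hξ0 : (0:ℝ) ≤ ξ := by
    set c : ℝ := 1/2 - a with hc
    have hc0 : 0 < c := by rw [hc]; linarith
    set D : ℝ := b / c with hD
    have hD0 : 0 ≤ D := div_nonneg hb0 hc0.le
    set q : ℝ := (1-α)/(2*α-1) with hq
    set B : ℝ := b * D ^ q with hB
    have hB0 : 0 ≤ B := mul_nonneg hb0 (Real.rpow_nonneg hD0 q)
    have hub : ∀ n : ℕ, a * (n:ℝ)^α + b * (n:ℝ)^(1-α) - (1/2) * (n:ℝ)^α ≤ B := by
      intro n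
      have hkey : b * (n:ℝ)^(1-α) - c * (n:ℝ)^α ≤ B := by
        rcases Nat.eq_zero_or_pos n with h0 | hpos
        · subst h0
          simp [Real.zero_rpow hα0.ne', Real.zero_rpow h1α.ne', hB0]
        · have hn0 : (0:ℝ) < (n:ℝ) := by exact_mod_cast hpos
          rcases le_or_gt ((n:ℝ) ^ (2*α-1)) D with hcase | hcase
          · have h1 : (n:ℝ)^(1-α) = ((n:ℝ)^(2*α-1))^q := by
              rw [← Real.rpow_mul hn0.le, hq]
              congr 1
              field_simp
              exact (div_self (by linarith)).symm
            have h2 : (n:ℝ)^(1-α) ≤ D^q := by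
              rw [h1]
              exact Real.rpow_le_rpow (Real.rpow_nonneg hn0.le _) hcase (by positivity)
            have h3 : b * (n:ℝ)^(1-α) ≤ B := by
              rw [hB]; exact mul_le_mul_of_nonneg_left h2 hb0
            nlinarith [Real.rpow_nonneg hn0.le α, mul_nonneg hc0.le (Real.rpow_nonneg hn0.le α)]
          · have h1 : (n:ℝ)^α = (n:ℝ)^(1-α) * (n:ℝ)^(2*α-1) := by
              rw [← Real.rpow_add hn0]
              congr 1; ring
            have h2 : b * (n:ℝ)^(1-α) ≤ c * (n:ℝ)^α := by
              rw [h1, ← mul_assoc]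
              have hbc : b ≤ c * (n:ℝ)^(2*α-1) := by
                have := (div_le_iff₀ hc0).mp hcase.le
                nlinarith
              calc b * (n:ℝ)^(1-α) ≤ (c * (n:ℝ)^(2*α-1)) * (n:ℝ)^(1-α) :=
                    mul_le_mul_of_nonneg_right hbc (Real.rpow_nonneg hn0.le _)
              _ = c * (n:ℝ)^(1-α) * (n:ℝ)^(2*α-1) := by ring
            linarith
      have hgoal : a * (n:ℝ)^α + b * (n:ℝ)^(1-α) - (1/2) * (n:ℝ)^α
          = b * (n:ℝ)^(1-α) - c * (n:ℝ)^α := by rw [hc]; ring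
      rw [hgoal]
      exact hkey
    have hbdd : BddAbove (Set.range fun n : ℕ =>
        a * (n:ℝ)^α + b * (n:ℝ)^(1-α) - (1/2) * (n:ℝ)^α) := by
      refine ⟨B, ?_⟩
      rintro x ⟨n, rfl⟩
      exact hub n
    have h0 : a * ((0:ℕ):ℝ)^α + b * ((0:ℕ):ℝ)^(1-α) - (1/2) * ((0:ℕ):ℝ)^α = 0 := by
      simp [Real.zero_rpow hα0.ne', Real.zero_rpow h1α.ne']
    rw [hξ]
    calc (0:ℝ) = a * ((0:ℕ):ℝ)^α + b * ((0:ℕ):ℝ)^(1-α) - (1/2) * ((0:ℕ):ℝ)^α := h0.symm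
    _ ≤ _ := le_ciSup hbdd 0
  -- measurability of S
  have hSmeas : ∀ m, Measurable (S m) := by
    intro m
    have : S m = fun ω => ∑ i ∈ Finset.range m, X i ω := funext (hS m)
    rw [this]
    exact Finset.measurable_sum _ (fun i _ => hmeas i)
  -- Chernoff bound
  have hcher : ∀ (m : ℕ) (θ y : ℝ), 0 < θ → θ < δ' →
      P {ω | y ≤ S m ω} ≤ ENNReal.ofReal (Real.exp ((m:ℝ) * θ^2 - θ * y)) := by
    intro m θ y hθ0 hθδ'
    have hθδ : |θ| < δ := by rw [abs_of_pos hθ0]; exact lt_of_lt_of_le hθδ' hδ'le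
    have hXint : ∀ i, Integrable (fun ω => exp (θ * X i ω)) P := by
      intro i
      have hcomp : IdentDistrib (fun ω => exp (θ * X i ω)) (fun ω => exp (θ * X 0 ω)) P P :=
        (hident i).comp (measurable_exp.comp (measurable_const_mul θ))
      exact hcomp.integrable_iff.mpr (hmgf θ hθδ)
    have hmgfi : ∀ i, mgf (X i) P θ = mgf (X 0) P θ := by
      intro i
      have hcomp : IdentDistrib (fun ω => exp (θ * X i ω)) (fun ω => exp (θ * X 0 ω)) P P :=
        (hident i).comp (measurable_exp.comp (measurable_const_mul θ))
      exact hcomp.integral_eq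
    have hmgf0 : mgf (X 0) P θ ≤ Real.exp (θ^2) := by
      have hpos : 0 < mgf (X 0) P θ := mgf_pos (hmgf θ hθδ)
      have hlog : Real.log (mgf (X 0) P θ) ≤ θ^2 := by
        have := hψ θ (by rw [abs_of_pos hθ0]; exact hθδ')
        rwa [hψdef θ hθδ] at this
      calc mgf (X 0) P θ = Real.exp (Real.log (mgf (X 0) P θ)) := (Real.exp_log hpos).symm
      _ ≤ Real.exp (θ^2) := Real.exp_le_exp.mpr hlog
    have hSfun : S m = (∑ i ∈ Finset.range m, X i) := by
      funext ω; rw [hS]; simp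
    have hint : Integrable (fun ω => exp (θ * (∑ i ∈ Finset.range m, X i) ω)) P :=
      hindep.integrable_exp_mul_sum hmeas (fun i _ => hXint i)
    have hch := measure_ge_le_exp_mul_mgf (μ := P) (X := ∑ i ∈ Finset.range m, X i) y hθ0.le hint
    have hmgfS : mgf (∑ i ∈ Finset.range m, X i) P θ ≤ Real.exp ((m:ℝ) * θ^2) := by
      rw [hindep.mgf_sum hmeas]
      calc (∏ i ∈ Finset.range m, mgf (X i) P θ) = (mgf (X 0) P θ) ^ m := by
            rw [Finset.prod_congr rfl (fun i _ => hmgfi i), Finset.prod_const, Finset.card_range]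
      _ ≤ (Real.exp (θ^2)) ^ m := pow_le_pow_left₀ mgf_nonneg hmgf0 m
      _ = Real.exp ((m:ℝ) * θ^2) := by rw [← Real.exp_nat_mul]
    have hset : {ω | y ≤ S m ω} = {ω | y ≤ (∑ i ∈ Finset.range m, X i) ω} := by rw [hSfun]
    rw [hset]
    have hne : P {ω | y ≤ (∑ i ∈ Finset.range m, X i) ω} ≠ ⊤ := measure_ne_top _ _
    rw [← ENNReal.ofReal_toReal hne]
    apply ENNReal.ofReal_le_ofReal
    calc (P {ω | y ≤ (∑ i ∈ Finset.range m, X i) ω}).toReal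
        ≤ Real.exp (-θ * y) * mgf (∑ i ∈ Finset.range m, X i) P θ := hch
    _ ≤ Real.exp (-θ * y) * Real.exp ((m:ℝ) * θ^2) :=
          mul_le_mul_of_nonneg_left hmgfS (Real.exp_nonneg _)
    _ = Real.exp ((m:ℝ) * θ^2 - θ * y) := by rw [← Real.exp_add]; ring_nf
  -- pathwise record bound
  have hrec : ∀ ω (j : ℕ) (t : ℕ), T j ω = (t:ℕ∞) →
      a * (t:ℝ)^α + b * (t:ℝ)^(1-α) ≤ S t ω := by
    intro ω j
    induction j with
    | zero =>
      intro t htt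
      have ht0 : t = 0 := by
        have := (hT0 ω).symm.trans htt
        exact_mod_cast this.symm
      subst ht0
      simp only [Nat.cast_zero, Real.zero_rpow hα0.ne', Real.zero_rpow h1α.ne', mul_zero, add_zero]
      rw [hS]; simp
    | succ j ih =>
      intro t htt
      obtain ⟨s, hTs⟩ : ∃ s : ℕ, T j ω = (s:ℕ∞) := by
        cases hTj : T j ω with
        | top => rw [hTtop j ω hTj] at htt; exact absurd htt.symm (by simp)
        | coe s => exact ⟨s, rfl⟩
      have hrec' := hTrec j ω s hTs
      rw [htt] at hrec'
      set Aset := {m : ℕ | s < m ∧ S m ω > S s ω + a * ((m:ℝ) - (s:ℝ))^α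
              + b * ((m:ℝ) - (s:ℝ))^(1-α)} with hAset
      have hne : Aset.Nonempty := by
        by_contra hemp
        rw [Set.not_nonempty_iff_eq_empty] at hemp
        rw [hemp] at hrec'
        simp at hrec'
      have hmem : sInf ((fun m : ℕ => (m : ℕ∞)) '' Aset) ∈ (fun m : ℕ => (m : ℕ∞)) '' Aset :=
        csInf_mem (hne.image _)
      rw [← hrec'] at hmem
      obtain ⟨m, hmA, hmt⟩ := hmem
      have hmt' : m = t := by exact_mod_cast (show (m:ℕ∞) = (t:ℕ∞) from hmt)
      subst hmt'
      obtain ⟨hsm, hgt⟩ := hmA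
      have ihs := ih s hTs
      have hms0 : (0:ℝ) ≤ (m:ℝ) - (s:ℝ) := by
        have : (s:ℝ) ≤ (m:ℝ) := by exact_mod_cast hsm.le
        linarith
      have hsub1 : (m:ℝ)^α ≤ (s:ℝ)^α + ((m:ℝ)-(s:ℝ))^α := by
        have := aux_rpow_subadd (x := (s:ℝ)) (y := (m:ℝ)-(s:ℝ)) (p := α)
          (Nat.cast_nonneg s) hms0 hα0.le hα1.le
        have heq : (s:ℝ) + ((m:ℝ)-(s:ℝ)) = (m:ℝ) := by ring
        rwa [heq] at this
      have hsub2 : (m:ℝ)^(1-α) ≤ (s:ℝ)^(1-α) + ((m:ℝ)-(s:ℝ))^(1-α) := by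
        have := aux_rpow_subadd (x := (s:ℝ)) (y := (m:ℝ)-(s:ℝ)) (p := 1-α)
          (Nat.cast_nonneg s) hms0 h1α.le (by linarith)
        have heq : (s:ℝ) + ((m:ℝ)-(s:ℝ)) = (m:ℝ) := by ring
        rwa [heq] at this
      nlinarith [hgt, ihs, mul_le_mul_of_nonneg_left hsub1 ha0.le,
        mul_le_mul_of_nonneg_left hsub2 hb0]
  -- the key random variable
  set M : Ω → ℝ := fun ω => S (T (κ ω - 1) ω).toNat ω with hM
  have hΓ' : ∀ ω, Γ ω = ⌈(2 * M ω + 2 * ξ) ^ (1/α)⌉₊ := hΓ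
  have hM0 : ∀ ω, 0 ≤ M ω := by
    intro ω
    show (0:ℝ) ≤ S (T (κ ω - 1) ω).toNat ω
    cases h : T (κ ω - 1) ω with
    | top =>
      rw [show ((⊤:ℕ∞)).toNat = 0 from rfl, hS]
      simp
    | coe t =>
      rw [show (((t:ℕ):ℕ∞)).toNat = t from rfl]
      have := hrec ω (κ ω - 1) t h
      have h1 : 0 ≤ a * (t:ℝ)^α := mul_nonneg ha0.le (Real.rpow_nonneg (Nat.cast_nonneg t) _)
      have h2 : 0 ≤ b * (t:ℝ)^(1-α) := mul_nonneg hb0 (Real.rpow_nonneg (Nat.cast_nonneg t) _)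
      linarith
  have hMrec : ∀ ω, 0 < M ω → ∃ t : ℕ, 1 ≤ t ∧ M ω = S t ω ∧ a * (t:ℝ)^α ≤ S t ω := by
    intro ω hpos
    have hpos' : 0 < S (T (κ ω - 1) ω).toNat ω := hpos
    show ∃ t : ℕ, 1 ≤ t ∧ S (T (κ ω - 1) ω).toNat ω = S t ω ∧ a * (t:ℝ)^α ≤ S t ω
    cases h : T (κ ω - 1) ω with
    | top =>
      rw [h] at hpos'
      rw [show ((⊤:ℕ∞)).toNat = 0 from rfl, hS] at hpos'
      simp at hpos'
    | coe t =>
      rw [h] at hpos'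
      rw [show (((t:ℕ):ℕ∞)).toNat = t from rfl] at hpos' ⊢
      have hrect := hrec ω (κ ω - 1) t h
      have h2 : 0 ≤ b * (t:ℝ)^(1-α) := mul_nonneg hb0 (Real.rpow_nonneg (Nat.cast_nonneg t) _)
      refine ⟨t, ?_, rfl, by linarith⟩
      by_contra ht0
      push_neg at ht0
      interval_cases t
      rw [hS] at hpos'
      simp at hpos'
  -- the tail quantities
  set x : ℕ → ℝ := fun n => (((n:ℝ)-1)^α - 2*ξ)/2 with hx
  set N₀ : ℕ := 2 + ⌈(4*ξ)^(1/α)⌉₊ with hN₀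
  have hxlb : ∀ n : ℕ, N₀ < n → (n:ℝ)^α/8 ≤ x n ∧ 0 ≤ x n := by
    intro n hn
    have hn3 : 3 ≤ n := by omega
    have hnr : (3:ℝ) ≤ (n:ℝ) := by exact_mod_cast hn3
    have hceil : (4*ξ)^(1/α) ≤ (⌈(4*ξ)^(1/α)⌉₊ : ℝ) := Nat.le_ceil _
    have hnN : ((N₀:ℕ):ℝ) < (n:ℝ) := by exact_mod_cast hn
    have hN₀r : ((N₀:ℕ):ℝ) = 2 + (⌈(4*ξ)^(1/α)⌉₊ : ℝ) := by rw [hN₀]; push_cast; ring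
    have hn1 : (4*ξ)^(1/α) ≤ (n:ℝ) - 1 := by
      rw [hN₀r] at hnN; linarith
    have h4ξ : 4*ξ ≤ ((n:ℝ)-1)^α := by
      have h1 : ((4*ξ)^(1/α))^α ≤ ((n:ℝ)-1)^α :=
        Real.rpow_le_rpow (Real.rpow_nonneg (by linarith) _) hn1 hα0.le
      have h2 : ((4*ξ)^(1/α))^α = 4*ξ := by
        rw [← Real.rpow_mul (by linarith : (0:ℝ) ≤ 4*ξ), one_div, inv_mul_cancel₀ hα0.ne',
          Real.rpow_one]
      linarith [h2 ▸ h1]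
    have hhalf : (n:ℝ)/2 ≤ (n:ℝ) - 1 := by linarith
    have hna : (n:ℝ)^α/2 ≤ ((n:ℝ)-1)^α := by
      have h1 : ((n:ℝ)/2)^α ≤ ((n:ℝ)-1)^α :=
        Real.rpow_le_rpow (by positivity) hhalf hα0.le
      have h2 : ((n:ℝ)/2)^α = (n:ℝ)^α / (2:ℝ)^α :=
        Real.div_rpow (Nat.cast_nonneg n) (by norm_num : (0:ℝ) ≤ 2) α
      have h3 : (2:ℝ)^α ≤ 2 := by
        calc (2:ℝ)^α ≤ (2:ℝ)^(1:ℝ) :=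
              Real.rpow_le_rpow_of_exponent_le one_le_two hα1.le
        _ = 2 := Real.rpow_one 2
      have h4 : (n:ℝ)^α/2 ≤ (n:ℝ)^α/(2:ℝ)^α := by
        gcongr
      linarith [h2 ▸ h1]
    have hnn : 0 ≤ ((n:ℝ)-1)^α := Real.rpow_nonneg (by linarith) _
    constructor
    · rw [hx]; dsimp only; linarith
    · rw [hx]; dsimp only; linarith
  -- ceiling inversion
  have hΓx : ∀ ω (n : ℕ), 1 ≤ n → n ≤ Γ ω → x n < M ω := by
    intro ω n hn1 hnΓ
    have hbase : (0:ℝ) ≤ 2 * M ω + 2 * ξ := by linarith [hM0 ω, hξ0]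
    rw [hΓ' ω] at hnΓ
    have hlt : ((n - 1 : ℕ) : ℝ) < (2 * M ω + 2 * ξ) ^ (1/α) := by
      rw [← Nat.lt_ceil]
      omega
    have hcast : ((n - 1 : ℕ) : ℝ) = (n:ℝ) - 1 := by
      push_cast [hn1]; ring
    rw [hcast] at hlt
    have hnr1 : (0:ℝ) ≤ (n:ℝ) - 1 := by
      have : (1:ℝ) ≤ (n:ℝ) := by exact_mod_cast hn1
      linarith
    have hpow : ((n:ℝ)-1)^α < ((2 * M ω + 2 * ξ) ^ (1/α))^α :=
      Real.rpow_lt_rpow hnr1 hlt hα0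
    have heq : ((2 * M ω + 2 * ξ) ^ (1/α))^α = 2 * M ω + 2 * ξ := by
      rw [← Real.rpow_mul hbase, one_div, inv_mul_cancel₀ hα0.ne', Real.rpow_one]
    rw [heq] at hpow
    rw [hx]; dsimp only; linarith
  -- the covering events
  set Bset : ℕ → ℕ → Set Ω := fun m n =>
    if 1 ≤ m then {ω | (x n + a * (m:ℝ)^α)/2 ≤ S m ω} else ∅ with hBset
  set A : ℕ → Set Ω := fun n => if n ≤ N₀ then Set.univ else ⋃ m, Bset m n with hA
  have hmeasA : ∀ n, MeasurableSet (A n) := by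
    intro n
    rw [hA]
    dsimp only
    split
    · exact MeasurableSet.univ
    · apply MeasurableSet.iUnion
      intro m
      rw [hBset]
      dsimp only
      split
      · exact measurableSet_le measurable_const (hSmeas m)
      · exact MeasurableSet.empty
  have hmemA : ∀ ω, ω ∈ A (Γ ω) := by
    intro ω
    by_cases hn : Γ ω ≤ N₀
    · rw [hA]; dsimp only; rw [if_pos hn]; trivial
    · push_neg at hn
      have hn1 : 1 ≤ Γ ω := by omega
      have hxM : x (Γ ω) < M ω := hΓx ω (Γ ω) hn1 le_rfl
      have hx0 : 0 ≤ x (Γ ω) := (hxlb (Γ ω) hn).2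
      obtain ⟨t, ht1, htM, hta⟩ := hMrec ω (lt_of_le_of_lt hx0 hxM)
      rw [hA]; dsimp only; rw [if_neg (by omega)]
      apply Set.mem_iUnion.mpr
      refine ⟨t, ?_⟩
      rw [hBset]; dsimp only; rw [if_pos ht1]
      show (x (Γ ω) + a * (t:ℝ)^α)/2 ≤ S t ω
      have : x (Γ ω) < S t ω := htM ▸ hxM
      linarith
  -- pointwise domination
  have hpoint : ∀ ω, ENNReal.ofReal ((Γ ω : ℝ) ^ r) ≤
      ∑' n : ℕ, (A n).indicator (fun _ => ENNReal.ofReal ((n:ℝ)^r)) ω := by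
    intro ω
    have h1 : (A (Γ ω)).indicator (fun _ => ENNReal.ofReal (((Γ ω : ℕ):ℝ)^r)) ω
        = ENNReal.ofReal ((Γ ω : ℝ)^r) := Set.indicator_of_mem (hmemA ω) _
    calc ENNReal.ofReal ((Γ ω : ℝ) ^ r)
        = (A (Γ ω)).indicator (fun _ => ENNReal.ofReal (((Γ ω : ℕ):ℝ)^r)) ω := h1.symm
    _ ≤ _ := ENNReal.le_tsum (Γ ω)
  -- integrate
  have hint1 : ∫⁻ ω, ENNReal.ofReal ((Γ ω : ℝ) ^ r) ∂P ≤
      ∑' n : ℕ, ENNReal.ofReal ((n:ℝ)^r) * P (A n) := by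
    calc ∫⁻ ω, ENNReal.ofReal ((Γ ω : ℝ) ^ r) ∂P
        ≤ ∫⁻ ω, ∑' n : ℕ, (A n).indicator (fun _ => ENNReal.ofReal ((n:ℝ)^r)) ω ∂P :=
          lintegral_mono hpoint
    _ = ∑' n : ℕ, ∫⁻ ω, (A n).indicator (fun _ => ENNReal.ofReal ((n:ℝ)^r)) ω ∂P :=
          lintegral_tsum (fun n => (measurable_const.indicator (hmeasA n)).aemeasurable)
    _ = ∑' n : ℕ, ENNReal.ofReal ((n:ℝ)^r) * P (A n) := by
          congr 1
          funext n
          exact lintegral_indicator_const (hmeasA n) _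
  -- the exponential bounds
  set E₁ : ℕ → ℝ := fun n => Real.exp (-(a/64 * (n:ℝ)^(2*α-1))) with hE₁
  set E₂ : ℕ → ℝ := fun n => Real.exp (-(a^2/32 * (n:ℝ)^(2*α-1))) with hE₂
  set C : ℝ≥0∞ := ∑' m : ℕ, ENNReal.ofReal (E₂ m) with hC
  have hCtop : C < ⊤ := by
    rw [hC]
    have heq : ∀ m : ℕ, E₂ m = (m:ℝ)^(0:ℝ) * Real.exp (-(a^2/32 * (m:ℝ)^(2*α-1))) := by
      intro m; rw [hE₂]; dsimp only; rw [Real.rpow_zero, one_mul]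
    calc ∑' m : ℕ, ENNReal.ofReal (E₂ m)
        = ∑' m : ℕ, ENNReal.ofReal ((m:ℝ)^(0:ℝ) * Real.exp (-(a^2/32 * (m:ℝ)^(2*α-1)))) := by
          congr 1; funext m; rw [heq m]
    _ < ⊤ := aux_summable_rpow_mul_exp (by positivity) h2α
  -- Chernoff bound for each covering event
  have hPB : ∀ m n : ℕ, N₀ < n → P (Bset m n) ≤
      (if m < n then ENNReal.ofReal (E₁ n) else ENNReal.ofReal (E₂ n) * ENNReal.ofReal (E₂ m)) := by
    intro m n hn
    rcases Nat.eq_zero_or_pos m with hm0 | hm1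
    · subst hm0
      rw [hBset]; dsimp only; rw [if_neg (by omega)]
      simp only [measure_empty]
      exact zero_le
    · have hmr : (1:ℝ) ≤ (m:ℝ) := by exact_mod_cast hm1
      have hmr0 : (0:ℝ) < (m:ℝ) := by linarith
      set θ : ℝ := a/4 * (m:ℝ)^(α-1) with hθ
      have hθ0 : 0 < θ := by
        rw [hθ]; positivity
      have hθδ' : θ < δ' := by
        have h1 : (m:ℝ)^(α-1) ≤ 1 :=
          Real.rpow_le_one_of_one_le_of_nonpos hmr (by linarith)
        have h2 : θ ≤ a/4 := by
          rw [hθ]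
          calc a/4 * (m:ℝ)^(α-1) ≤ a/4 * 1 := by
                apply mul_le_mul_of_nonneg_left h1 (by positivity)
          _ = a/4 := mul_one _
        linarith
      have hm1' : 1 ≤ m := hm1
      have hBeq : Bset m n = {ω | (x n + a * (m:ℝ)^α)/2 ≤ S m ω} := by
        rw [hBset]; dsimp only; rw [if_pos hm1']
      rw [hBeq]
      have hch := hcher m θ ((x n + a * (m:ℝ)^α)/2) hθ0 hθδ'
      have hA2 : (m:ℝ) * ((m:ℝ)^(α-1))^2 = (m:ℝ)^(2*α-1) := by
        have e1 : ((m:ℝ)^(α-1))^2 = (m:ℝ)^(2*α-2) := by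
          rw [← Real.rpow_natCast ((m:ℝ)^(α-1)) 2, ← Real.rpow_mul hmr0.le]
          norm_num; ring_nf
        rw [e1]
        rw [show (m:ℝ) * (m:ℝ)^(2*α-2) = (m:ℝ)^(1:ℝ) * (m:ℝ)^(2*α-2) by rw [Real.rpow_one],
          ← Real.rpow_add hmr0]
        ring_nf
      have hB2 : (m:ℝ)^(α-1) * (m:ℝ)^α = (m:ℝ)^(2*α-1) := by
        rw [← Real.rpow_add hmr0]; ring_nf
      have hexpo : (m:ℝ) * θ^2 - θ * ((x n + a * (m:ℝ)^α)/2)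
          = -(a^2/16 * (m:ℝ)^(2*α-1)) - a/8 * ((m:ℝ)^(α-1) * x n) := by
        rw [hθ]
        linear_combination (a^2/16) * hA2 - (a^2/8) * hB2
      rw [hexpo] at hch
      refine hch.trans ?_
      by_cases hmn : m < n
      · rw [if_pos hmn]
        apply ENNReal.ofReal_le_ofReal
        rw [hE₁]
        apply Real.exp_le_exp.mpr
        have hnr0 : (0:ℝ) < (n:ℝ) := by
          have : (0:ℕ) < n := by omega
          exact_mod_cast this
        have hmn' : (m:ℝ) ≤ (n:ℝ) := by exact_mod_cast hmn.le
        have h1 : (n:ℝ)^(α-1) ≤ (m:ℝ)^(α-1) :=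
          Real.rpow_le_rpow_of_nonpos hmr0 hmn' (by linarith)
        have h2 : (n:ℝ)^α/8 ≤ x n := (hxlb n hn).1
        have h3 : (n:ℝ)^(α-1) * ((n:ℝ)^α/8) ≤ (m:ℝ)^(α-1) * x n := by
          apply mul_le_mul h1 h2 (by positivity) (Real.rpow_nonneg hmr0.le _)
        have h4 : (n:ℝ)^(α-1) * (n:ℝ)^α = (n:ℝ)^(2*α-1) := by
          rw [← Real.rpow_add hnr0]; ring_nf
        have h5 : (n:ℝ)^(2*α-1)/8 ≤ (m:ℝ)^(α-1) * x n := by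
          calc (n:ℝ)^(2*α-1)/8 = (n:ℝ)^(α-1) * ((n:ℝ)^α/8) := by rw [← h4]; ring
          _ ≤ (m:ℝ)^(α-1) * x n := h3
        have h6 : (0:ℝ) ≤ a^2/16 * (m:ℝ)^(2*α-1) := by positivity
        nlinarith [h5, h6]
      · rw [if_neg hmn]
        push_neg at hmn
        rw [← ENNReal.ofReal_mul (Real.exp_nonneg _)]
        apply ENNReal.ofReal_le_ofReal
        rw [hE₂]
        dsimp only
        rw [← Real.exp_add]
        apply Real.exp_le_exp.mpr
        have hmn' : (n:ℝ) ≤ (m:ℝ) := by exact_mod_cast hmn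
        have h1 : (n:ℝ)^(2*α-1) ≤ (m:ℝ)^(2*α-1) :=
          Real.rpow_le_rpow (by positivity) hmn' h2α.le
        have h2 : 0 ≤ (m:ℝ)^(α-1) * x n :=
          mul_nonneg (Real.rpow_nonneg hmr0.le _) (hxlb n hn).2
        nlinarith [h1, h2]
  -- bound on P (A n) for large n
  have hPA : ∀ n : ℕ, N₀ < n → P (A n) ≤
      (n : ℝ≥0∞) * ENNReal.ofReal (E₁ n) + ENNReal.ofReal (E₂ n) * C := by
    intro n hn
    have hAeq : A n = ⋃ m, Bset m n := by
      rw [hA]; dsimp only; rw [if_neg (by omega)]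
    rw [hAeq]
    calc P (⋃ m, Bset m n) ≤ ∑' m : ℕ, P (Bset m n) := measure_iUnion_le _
    _ ≤ ∑' m : ℕ, ((if m < n then ENNReal.ofReal (E₁ n) else 0)
          + ENNReal.ofReal (E₂ n) * ENNReal.ofReal (E₂ m)) := by
          apply ENNReal.tsum_le_tsum
          intro m
          refine (hPB m n hn).trans ?_
          by_cases hmn : m < n
          · rw [if_pos hmn, if_pos hmn]
            exact le_add_right le_rfl
          · rw [if_neg hmn, if_neg hmn]
            exact le_add_left le_rfl
    _ = (∑' m : ℕ, (if m < n then ENNReal.ofReal (E₁ n) else 0))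
          + ∑' m : ℕ, ENNReal.ofReal (E₂ n) * ENNReal.ofReal (E₂ m) := ENNReal.tsum_add
    _ = (n : ℝ≥0∞) * ENNReal.ofReal (E₁ n) + ENNReal.ofReal (E₂ n) * C := by
          congr 1
          · rw [tsum_eq_sum (s := Finset.range n)
              (fun m hm => if_neg (by simpa using hm))]
            rw [Finset.sum_ite_of_true (fun m hm => Finset.mem_range.mp hm)]
            rw [Finset.sum_const, Finset.card_range, nsmul_eq_mul]
          · rw [hC, ENNReal.tsum_mul_left]
  -- final summation
  set w₁ : ℕ → ℝ≥0∞ := fun n => if n ≤ N₀ then ENNReal.ofReal ((n:ℝ)^r) else 0 with hw₁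
  set w₂ : ℕ → ℝ≥0∞ := fun n => ENNReal.ofReal ((n:ℝ)^(r+1) * E₁ n) with hw₂
  set w₃ : ℕ → ℝ≥0∞ := fun n => C * ENNReal.ofReal ((n:ℝ)^r * E₂ n) with hw₃
  have hgw : ∀ n : ℕ, ENNReal.ofReal ((n:ℝ)^r) * P (A n) ≤ w₁ n + w₂ n + w₃ n := by
    intro n
    by_cases hn : n ≤ N₀
    · have h1 : ENNReal.ofReal ((n:ℝ)^r) * P (A n) ≤ ENNReal.ofReal ((n:ℝ)^r) * 1 :=
        mul_le_mul_right prob_le_one _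
      rw [mul_one] at h1
      have h2 : w₁ n = ENNReal.ofReal ((n:ℝ)^r) := by rw [hw₁]; dsimp only; rw [if_pos hn]
      calc ENNReal.ofReal ((n:ℝ)^r) * P (A n) ≤ ENNReal.ofReal ((n:ℝ)^r) := h1
      _ = w₁ n := h2.symm
      _ ≤ w₁ n + w₂ n + w₃ n := by
            exact le_add_right (le_add_right le_rfl)
    · push_neg at hn
      have hn0 : (0:ℝ) < (n:ℝ) := by
        have : (0:ℕ) < n := by omega
        exact_mod_cast this
      have h1 := hPA n hn
      calc ENNReal.ofReal ((n:ℝ)^r) * P (A n)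
          ≤ ENNReal.ofReal ((n:ℝ)^r) *
            ((n : ℝ≥0∞) * ENNReal.ofReal (E₁ n) + ENNReal.ofReal (E₂ n) * C) :=
            mul_le_mul_right h1 _
      _ = ENNReal.ofReal ((n:ℝ)^r) * ((n : ℝ≥0∞) * ENNReal.ofReal (E₁ n))
            + ENNReal.ofReal ((n:ℝ)^r) * (ENNReal.ofReal (E₂ n) * C) := by
            rw [mul_add]
      _ = w₂ n + w₃ n := by
            congr 1
            · rw [hw₂]
              dsimp only
              rw [show ((n:ℕ) : ℝ≥0∞) = ENNReal.ofReal ((n:ℕ):ℝ) from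
                  (ENNReal.ofReal_natCast n).symm]
              rw [← mul_assoc, ← ENNReal.ofReal_mul (Real.rpow_nonneg hn0.le _),
                ← ENNReal.ofReal_mul (mul_nonneg (Real.rpow_nonneg hn0.le _) (Nat.cast_nonneg n))]
              congr 1
              rw [Real.rpow_add_one hn0.ne']
            · rw [hw₃]
              dsimp only
              rw [← mul_assoc, ← ENNReal.ofReal_mul (Real.rpow_nonneg hn0.le _)]
              exact mul_comm _ _
      _ ≤ w₁ n + w₂ n + w₃ n := by
            rw [add_assoc]
            exact le_add_left le_rfl
  have hw₁top : ∑' n : ℕ, w₁ n < ⊤ := by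
    rw [tsum_eq_sum (s := Finset.range (N₀+1)) (f := w₁)
      (fun m hm => by rw [hw₁]; dsimp only; rw [if_neg (by simp at hm; omega)])]
    exact ENNReal.sum_lt_top.mpr (fun n _ => by
      rw [hw₁]; dsimp only; split
      · exact ENNReal.ofReal_lt_top
      · exact ENNReal.zero_lt_top)
  have hw₂top : ∑' n : ℕ, w₂ n < ⊤ := by
    rw [hw₂]
    exact aux_summable_rpow_mul_exp (by positivity) h2α
  have hw₃top : ∑' n : ℕ, w₃ n < ⊤ := by
    rw [hw₃, ENNReal.tsum_mul_left]
    exact ENNReal.mul_lt_top hCtop (aux_summable_rpow_mul_exp (by positivity) h2α)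
  calc ∫⁻ ω, ENNReal.ofReal ((Γ ω : ℝ) ^ r) ∂P
      ≤ ∑' n : ℕ, ENNReal.ofReal ((n:ℝ)^r) * P (A n) := hint1
  _ ≤ ∑' n : ℕ, (w₁ n + w₂ n + w₃ n) := ENNReal.tsum_le_tsum hgw
  _ = (∑' n : ℕ, (w₁ n + w₂ n)) + ∑' n : ℕ, w₃ n := ENNReal.tsum_add
  _ = (∑' n : ℕ, w₁ n) + (∑' n : ℕ, w₂ n) + ∑' n : ℕ, w₃ n := by
        rw [ENNReal.tsum_add]
  _ < ⊤ := by
        apply ENNReal.add_lt_top.mpr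
        exact ⟨ENNReal.add_lt_top.mpr ⟨hw₁top, hw₂top⟩, hw₃top⟩
end
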